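/- arXiv:2106.12493 — 8 statements merged into one kernel-verified Lean document; each statement's English description precedes it below -/
import Mathlib

section
/- For any two Borel probability measures μ, ν on a compact subset S of ℝ, ρ_tv(μ,ν)² ≤ 4 J(μ,ν), where ρ_tv(μ,ν) = 2·sup{ |μ(A) − ν(A)| : A ⊆ S Borel } is the total variation distance. Equivalently, (sup_A |μ(A) − ν(A)|)² ≤ J(μ,ν). -/
open MeasureTheory ProbabilityTheory Filter Topology
open scoped ENNReal NNReal Classical

/-- Relative entropy (Kullback–Leibler divergence) `H(υ|μ)`, as an extended real:
`∫ log(dυ/dμ) dυ` if `υ ≪ μ` (and the integral exists), and `+∞` otherwise. -/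
noncomputable def relEnt {α : Type*} [MeasurableSpace α] (υ μ : Measure α) : EReal :=
  if υ ≪ μ ∧ Integrable (llr υ μ) υ then ((∫ x, llr υ μ x ∂υ : ℝ) : EReal) else ⊤

/-- The J-divergence `J(μ,ν) = inf { H(υ|μ) + H(υ|ν) : υ a probability measure }`. -/
noncomputable def Jdiv {α : Type*} [MeasurableSpace α] (μ ν : Measure α) : EReal :=
  ⨅ (υ : Measure α) (_ : IsProbabilityMeasure υ), relEnt υ μ + relEnt υ ν

/-!
Pinsker's inequality `2 (υ A - μ A)² ≤ H(υ|μ)` comes from the scalar bound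
`3 (x - 1)² ≤ 2 (x + 2) (x log x + 1 - x)` at the density `x = dυ/dμ`: an AM-GM step turns it into
`|x - 1| ≤ t (x + 2) / 3 + (x log x + 1 - x) / (2t)`, which integrates to
`(∫ |dυ/dμ - 1| dμ)² ≤ 2 H(υ|μ)`, and `2 |υ A - μ A| ≤ ∫ |dυ/dμ - 1| dμ`.
Given any `υ`, the triangle inequality through `υ` and `(a + b)² ≤ 2a² + 2b²` yield
`(μ A - ν A)² ≤ H(υ|μ) + H(υ|ν)`; take the supremum over `A` and the infimum over `υ`.
-/

open Set Real InformationTheory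

lemma monotoneOn_add_one_mul_log_sub :
    MonotoneOn (fun x : ℝ => (x + 1) * log x - 2 * (x - 1)) (Ioi 0) := by
  refine monotoneOn_of_hasDerivWithinAt_nonneg (f' := fun x => log x + x⁻¹ - 1) (convex_Ioi 0)
    ?_ (fun x hx => ?_) (fun x hx => ?_)
  · fun_prop (disch := exact fun x hx => ne_of_gt hx)
  · rw [interior_Ioi] at hx ⊢
    have hx0 : x ≠ 0 := ne_of_gt hx
    refine HasDerivAt.hasDerivWithinAt ?_
    refine ((hasDerivAt_id' x |>.add_const 1).mul (hasDerivAt_log hx0)).sub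
      ((hasDerivAt_id' x |>.sub_const 1).const_mul 2) |>.congr_deriv ?_
    field_simp
    ring
  · have := log_le_sub_one_of_pos (inv_pos.mpr (interior_subset hx : 0 < x))
    rw [log_inv] at this
    linarith

lemma three_mul_sq_sub_one_le_mul_klFun {x : ℝ} (hx : 0 ≤ x) :
    3 * (x - 1) ^ 2 ≤ 2 * (x + 2) * klFun x := by
  set F : ℝ → ℝ := fun x => 2 * (x + 2) * klFun x - 3 * (x - 1) ^ 2
  set g : ℝ → ℝ := fun x => (x + 1) * log x - 2 * (x - 1)
  have hF : ∀ x, 0 < x → HasDerivAt F (4 * g x) x := fun x hx => by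
    refine (((hasDerivAt_id' x |>.add_const 2).const_mul 2).mul (hasDerivAt_klFun (ne_of_gt hx))
      |>.sub (((hasDerivAt_id' x |>.sub_const 1).pow 2).const_mul 3)) |>.congr_deriv ?_
    simp only [g, klFun_apply]
    ring
  have hFc : Continuous F := by fun_prop
  have hg1 : g 1 = 0 := by simp [g]
  have hmin : IsMinOn F (Ici 0) 1 := by
    refine isMinOn_Ici_of_anti_mono ?_ ?_
    · refine antitoneOn_of_hasDerivWithinAt_nonpos (f' := fun y => 4 * g y) (convex_Icc 0 1)
        hFc.continuousOn (fun y hy => ?_) (fun y hy => ?_) <;> rw [interior_Icc] at *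
      · exact (hF y hy.1).hasDerivWithinAt
      · have : g y ≤ g 1 :=
          monotoneOn_add_one_mul_log_sub (mem_Ioi.mpr hy.1) (mem_Ioi.mpr one_pos) hy.2.le
        change 4 * g y ≤ 0
        linarith
    · refine monotoneOn_of_hasDerivWithinAt_nonneg (f' := fun y => 4 * g y) (convex_Ici 1)
        hFc.continuousOn (fun y hy => ?_) (fun y hy => ?_) <;> rw [interior_Ici] at *
      · exact (hF y (one_pos.trans hy)).hasDerivWithinAt
      · have : g 1 ≤ g y := monotoneOn_add_one_mul_log_sub (mem_Ioi.mpr one_pos)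
          (mem_Ioi.mpr (one_pos.trans hy)) hy.le
        change 0 ≤ 4 * g y
        linarith
  have : F 1 ≤ F x := hmin (mem_Ici.mpr hx)
  simp only [F, klFun_one] at this
  linarith

lemma abs_sub_one_le_add_klFun_div {x t : ℝ} (hx : 0 ≤ x) (ht : 0 < t) :
    |x - 1| ≤ t * (x + 2) / 3 + klFun x / (2 * t) := by
  have hK := three_mul_sq_sub_one_le_mul_klFun hx
  have hu : 0 ≤ t * (x + 2) / 3 := by positivity
  have hv : 0 ≤ klFun x / (2 * t) := div_nonneg (klFun_nonneg hx) (by positivity)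
  have huv : t * (x + 2) / 3 * (klFun x / (2 * t)) = (x + 2) * klFun x / 6 := by
    field_simp
    ring
  refine abs_le_of_sq_le_sq ?_ (add_nonneg hu hv)
  nlinarith [sq_nonneg (t * (x + 2) / 3 - klFun x / (2 * t))]

lemma two_mul_abs_setIntegral_le_integral_abs {α : Type*} [MeasurableSpace α] {μ : Measure α}
    {f : α → ℝ} (hf : Integrable f μ) (hf0 : ∫ x, f x ∂μ = 0) {A : Set α}
    (hA : MeasurableSet A) :
    2 * |∫ x in A, f x ∂μ| ≤ ∫ x, |f x| ∂μ := by
  have hsplit : ∫ x in A, f x ∂μ + ∫ x in Aᶜ, f x ∂μ = 0 := hf0 ▸ integral_add_compl hA hf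
  rw [← integral_add_compl hA hf.abs]
  have hAc : |∫ x in Aᶜ, f x ∂μ| = |∫ x in A, f x ∂μ| := by
    rw [eq_neg_of_add_eq_zero_right hsplit, abs_neg]
  linarith [abs_integral_le_integral_abs (μ := μ.restrict A) (f := f),
    abs_integral_le_integral_abs (μ := μ.restrict Aᶜ) (f := f)]

section Pinsker

variable {α : Type*} [MeasurableSpace α] {υ μ : Measure α}
  [IsProbabilityMeasure υ] [IsProbabilityMeasure μ]

lemma sq_integral_abs_toReal_rnDeriv_sub_one_le (hυμ : υ ≪ μ)
    (hint : Integrable (llr υ μ) υ) :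
    (∫ x, |(υ.rnDeriv μ x).toReal - 1| ∂μ) ^ 2 ≤ 2 * ∫ x, llr υ μ x ∂υ := by
  set f : α → ℝ := fun x => (υ.rnDeriv μ x).toReal
  set D := ∫ x, |f x - 1| ∂μ
  have hf : Integrable f μ := Measure.integrable_toReal_rnDeriv
  have hf1 : ∫ x, f x ∂μ = 1 := by simp [f, Measure.integral_toReal_rnDeriv hυμ]
  have hK : Integrable (fun x => klFun (f x)) μ := (integrable_klFun_rnDeriv_iff hυμ).2 hint
  have hKeq : ∫ x, klFun (f x) ∂μ = ∫ x, llr υ μ x ∂υ := by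
    simp [f, integral_klFun_rnDeriv hυμ hint]
  rw [← hKeq]
  have hD0 : 0 ≤ D := integral_nonneg fun x => abs_nonneg (f x - 1)
  rcases hD0.eq_or_lt with hD | hD
  · rw [← hD]
    have : 0 ≤ ∫ x, klFun (f x) ∂μ := integral_nonneg fun x => klFun_nonneg ENNReal.toReal_nonneg
    nlinarith
  -- pointwise AM-GM with the optimal weight `t = D / 2`
  have hlin : Integrable (fun x => D / 2 * (f x + 2) / 3) μ :=
    ((hf.add (integrable_const 2)).const_mul (D / 2)).div_const 3
  have hle : D ≤ D / 2 + (∫ x, klFun (f x) ∂μ) / D := by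
    calc D ≤ ∫ x, (D / 2 * (f x + 2) / 3 + klFun (f x) / (2 * (D / 2))) ∂μ :=
          integral_mono (hf.sub (integrable_const 1)).abs (hlin.add (hK.div_const _))
            fun x => abs_sub_one_le_add_klFun_div ENNReal.toReal_nonneg (half_pos hD)
      _ = D / 2 + (∫ x, klFun (f x) ∂μ) / D := by
          rw [integral_add hlin (hK.div_const _), integral_div, integral_const_mul,
            integral_add hf (integrable_const _), integral_div, hf1]
          simp only [integral_const, probReal_univ, smul_eq_mul, one_mul]
          field_simp
          ring
  have := (le_div_iff₀ hD).1 (by linarith : D / 2 ≤ (∫ x, klFun (f x) ∂μ) / D)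
  nlinarith

theorem ofReal_two_mul_sq_sub_le_klDiv {A : Set α} (hA : MeasurableSet A) :
    ENNReal.ofReal (2 * ((υ A).toReal - (μ A).toReal) ^ 2) ≤ klDiv υ μ := by
  by_cases h : υ ≪ μ ∧ Integrable (llr υ μ) υ
  swap
  · rw [klDiv_eq_top_iff.2 fun hυμ hint => h ⟨hυμ, hint⟩]
    exact le_top
  obtain ⟨hυμ, hint⟩ := h
  rw [klDiv_of_ac_of_integrable hυμ hint]
  simp only [probReal_univ, add_sub_cancel_right]
  refine ENNReal.ofReal_le_ofReal ?_
  set f : α → ℝ := fun x => (υ.rnDeriv μ x).toReal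
  have hf : Integrable f μ := Measure.integrable_toReal_rnDeriv
  have hdiff : (υ A).toReal - (μ A).toReal = ∫ x in A, (f x - 1) ∂μ := by
    rw [integral_sub hf.integrableOn (integrableOn_const (measure_ne_top μ A)),
      Measure.setIntegral_toReal_rnDeriv hυμ A]
    simp [Measure.real]
  have hmean : ∫ x, (f x - 1) ∂μ = 0 := by
    simp [integral_sub hf (integrable_const 1), f, Measure.integral_toReal_rnDeriv hυμ]
  have hTV := pow_le_pow_left₀ (by positivity) (two_mul_abs_setIntegral_le_integral_abs
    (f := fun x => f x - 1) (hf.sub (integrable_const 1)) hmean hA) 2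
  have hL1 : (∫ x, |f x - 1| ∂μ) ^ 2 ≤ 2 * ∫ x, llr υ μ x ∂υ :=
    sq_integral_abs_toReal_rnDeriv_sub_one_le hυμ hint
  rw [hdiff]
  nlinarith [sq_abs (∫ x in A, (f x - 1) ∂μ)]

lemma relEnt_eq_klDiv : relEnt υ μ = klDiv υ μ := by
  unfold relEnt
  split_ifs with h
  · rw [← EReal.coe_ennreal_toReal (klDiv_ne_top h.1 h.2),
      toReal_klDiv_of_measure_eq h.1 (by simp)]
  · rw [klDiv_eq_top_iff.2 fun hυμ hint => h ⟨hυμ, hint⟩, EReal.coe_ennreal_top]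

end Pinsker

section TotalVariation

variable {α : Type*} [MeasurableSpace α]

/-- The paper's total variation distance is `ρ_tv μ ν = 2 * tvDist μ ν`. -/
noncomputable def tvDist (μ ν : Measure α) : ℝ :=
  ⨆ (A : Set α) (_ : MeasurableSet A), |(μ A).toReal - (ν A).toReal|

lemma tvDist_nonneg (μ ν : Measure α) : 0 ≤ tvDist μ ν :=
  Real.iSup_nonneg fun _ => Real.iSup_nonneg fun _ => abs_nonneg _

variable (υ : Measure α) {μ ν : Measure α}
  [IsProbabilityMeasure υ] [IsProbabilityMeasure μ] [IsProbabilityMeasure ν]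

lemma ofReal_sq_tvDist_le_klDiv_add :
    ENNReal.ofReal (tvDist μ ν ^ 2) ≤ klDiv υ μ + klDiv υ ν := by
  by_cases hfin : klDiv υ μ + klDiv υ ν = ⊤
  · simp [hfin]
  rw [ENNReal.ofReal_le_iff_le_toReal hfin]
  set K := (klDiv υ μ + klDiv υ ν).toReal
  have hA : ∀ A, MeasurableSet A → |(μ A).toReal - (ν A).toReal| ≤ √K := fun A hA => by
    have hsum := add_le_add (ofReal_two_mul_sq_sub_le_klDiv (υ := υ) (μ := μ) hA)
      (ofReal_two_mul_sq_sub_le_klDiv (υ := υ) (μ := ν) hA)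
    rw [← ENNReal.ofReal_add (by positivity) (by positivity),
      ENNReal.ofReal_le_iff_le_toReal hfin] at hsum
    refine Real.abs_le_sqrt ?_
    nlinarith [sq_nonneg ((υ A).toReal - (μ A).toReal + ((υ A).toReal - (ν A).toReal))]
  have hle : tvDist μ ν ≤ √K :=
    Real.iSup_le (fun A => Real.iSup_le (hA A) (Real.sqrt_nonneg _)) (Real.sqrt_nonneg _)
  calc tvDist μ ν ^ 2 ≤ √K ^ 2 := pow_le_pow_left₀ (tvDist_nonneg μ ν) hle 2
    _ = K := Real.sq_sqrt ENNReal.toReal_nonneg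

end TotalVariation

theorem sq_tvDist_le_Jdiv {α : Type*} [MeasurableSpace α] (μ ν : Measure α)
    [IsProbabilityMeasure μ] [IsProbabilityMeasure ν] :
    ((tvDist μ ν ^ 2 : ℝ) : EReal) ≤ Jdiv μ ν := by
  refine le_iInf₂ fun υ (_ : IsProbabilityMeasure υ) => ?_
  calc ((tvDist μ ν ^ 2 : ℝ) : EReal) = (ENNReal.ofReal (tvDist μ ν ^ 2) : EReal) := by
        rw [EReal.coe_ennreal_ofReal, max_eq_left (sq_nonneg _)]
    _ ≤ ((klDiv υ μ + klDiv υ ν : ℝ≥0∞) : EReal) :=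
        EReal.coe_ennreal_le_coe_ennreal_iff.2 (ofReal_sq_tvDist_le_klDiv_add υ)
    _ = relEnt υ μ + relEnt υ ν := by
        rw [EReal.coe_ennreal_add, relEnt_eq_klDiv, relEnt_eq_klDiv]

theorem stmt_6_general (S : Set ℝ) (μ ν : Measure S)
    [IsProbabilityMeasure μ] [IsProbabilityMeasure ν] :
    (((2 * ⨆ (A : Set S) (_ : MeasurableSet A), |(μ A).toReal - (ν A).toReal|) ^ 2 : ℝ) : EReal)
        ≤ 4 * Jdiv μ ν ∧
      (((⨆ (A : Set S) (_ : MeasurableSet A), |(μ A).toReal - (ν A).toReal|) ^ 2 : ℝ) : EReal)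
        ≤ Jdiv μ ν := by
  have key := sq_tvDist_le_Jdiv μ ν
  refine ⟨?_, key⟩
  calc (((2 * tvDist μ ν) ^ 2 : ℝ) : EReal) = 4 * ((tvDist μ ν ^ 2 : ℝ) : EReal) := by
        rw [show (2 * tvDist μ ν) ^ 2 = 4 * tvDist μ ν ^ 2 by ring, EReal.coe_mul]
        rfl
    _ ≤ 4 * Jdiv μ ν := mul_le_mul_of_nonneg_left key (by norm_num)

/-- For any two Borel probability measures μ, ν on a compact S ⊆ ℝ,
`ρ_tv(μ,ν)² ≤ 4 J(μ,ν)` where `ρ_tv(μ,ν) = 2 sup_A |μ(A) − ν(A)|`; equivalently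
`(sup_A |μ(A) − ν(A)|)² ≤ J(μ,ν)`. -/
theorem stmt_6 (S : Set ℝ) (hS : IsCompact S) (μ ν : Measure S)
    [IsProbabilityMeasure μ] [IsProbabilityMeasure ν] :
    (((2 * ⨆ (A : Set S) (_ : MeasurableSet A), |(μ A).toReal - (ν A).toReal|) ^ 2 : ℝ) : EReal)
        ≤ 4 * Jdiv μ ν ∧
      (((⨆ (A : Set S) (_ : MeasurableSet A), |(μ A).toReal - (ν A).toReal|) ^ 2 : ℝ) : EReal)
        ≤ Jdiv μ ν :=
  stmt_6_general S μ ν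
end

section
/- For any two Borel probability measures μ, ν on a compact subset S of ℝ: J(μ,ν) ≥ 0, J(μ,ν) = J(ν,μ), and J(μ,ν) = 0 if and only if μ = ν. -/
/-!
The argument runs through the Bhattacharyya coefficient `BC(μ, ν) = ∫ √(dμ dν)`. For a
probability measure `υ` with `H(υ|μ), H(υ|ν) < ∞`, Jensen's inequality for `exp` under `υ`
gives `exp (-(H(υ|μ) + H(υ|ν)) / 2) ≤ ∫ √(dμ/dυ · dν/dυ) dυ ≤ BC(μ, ν)`, hence
`J(μ, ν) ≥ -2 log BC(μ, ν)`.
Pointwise AM–GM gives `BC(μ, ν) ≤ ∫ (dμ + dν) / 2 = 1`, with equality only if the two densities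
agree, i.e. `μ = ν`. So `J ≥ 0`, and `J(μ, ν) > 0` for `μ ≠ ν`; `υ = μ` shows `J(μ, μ) = 0`.
-/

open MeasureTheory ProbabilityTheory Filter Topology
open scoped ENNReal NNReal Classical

namespace ENNReal

theorem rpow_inv_two_mul_rpow_inv_two_le {a b : ℝ≥0∞} (ha : a ≠ ∞) (hb : b ≠ ∞) :
    a ^ (2⁻¹ : ℝ) * b ^ (2⁻¹ : ℝ) ≤ (a + b) / 2 := by
  lift a to ℝ≥0 using ha
  lift b to ℝ≥0 using hb
  have := NNReal.geom_mean_le_arith_mean2_weighted 2⁻¹ 2⁻¹ a b (by norm_num)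
  rw [← ENNReal.coe_rpow_of_nonneg _ (by norm_num), ← ENNReal.coe_rpow_of_nonneg _ (by norm_num),
    ← ENNReal.coe_mul, ← ENNReal.coe_add, ← ENNReal.coe_ofNat, ← ENNReal.coe_div two_ne_zero,
    ENNReal.coe_le_coe]
  convert this using 1
  · simp
  · rw [add_div, div_eq_inv_mul, div_eq_inv_mul]

theorem eq_of_rpow_inv_two_mul_rpow_inv_two_eq {a b : ℝ≥0∞} (ha : a ≠ ∞) (hb : b ≠ ∞)
    (h : a ^ (2⁻¹ : ℝ) * b ^ (2⁻¹ : ℝ) = (a + b) / 2) : a = b := by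
  lift a to ℝ≥0 using ha
  lift b to ℝ≥0 using hb
  rw [← ENNReal.coe_rpow_of_nonneg _ (by norm_num), ← ENNReal.coe_rpow_of_nonneg _ (by norm_num),
    ← ENNReal.coe_mul, ← ENNReal.coe_add, ← ENNReal.coe_ofNat, ← ENNReal.coe_div two_ne_zero,
    ENNReal.coe_inj, ← NNReal.coe_inj] at h
  push_cast at h
  rw [ENNReal.coe_inj, ← NNReal.coe_inj]
  refine (Real.geom_mean_eq_arith_mean2_weighted_iff_of_pos (w₁ := 2⁻¹) (w₂ := 2⁻¹)
    (by norm_num) (by norm_num) a.coe_nonneg b.coe_nonneg (by norm_num)).mp ?_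
  rw [h]; ring

theorem div_rpow_inv_two_mul_div_rpow_inv_two {c : ℝ≥0∞} (a b : ℝ≥0∞) (hc : c ≠ ∞) :
    (a / c) ^ (2⁻¹ : ℝ) * (b / c) ^ (2⁻¹ : ℝ) = a ^ (2⁻¹ : ℝ) * b ^ (2⁻¹ : ℝ) / c := by
  have hc' : c ^ (2⁻¹ : ℝ) ≠ ∞ := ENNReal.rpow_ne_top_of_nonneg (by norm_num) hc
  have hc2 : c ^ (2⁻¹ : ℝ) * c ^ (2⁻¹ : ℝ) = c := by
    rw [← ENNReal.rpow_add_of_nonneg _ _ (by norm_num) (by norm_num)]; norm_num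
  rw [ENNReal.div_rpow_of_nonneg _ _ (by norm_num), ENNReal.div_rpow_of_nonneg _ _ (by norm_num),
    ← ENNReal.mul_div_mul_comm (.inr hc') (.inl hc'), hc2]

end ENNReal

section

variable {α : Type*} [MeasurableSpace α]

theorem MeasureTheory.Measure.rnDeriv_ae_eq_div {μ ν κ : Measure α} [SigmaFinite μ]
    [SigmaFinite ν] [SigmaFinite κ] (hνκ : ν ≪ κ) :
    μ.rnDeriv ν =ᵐ[ν] fun x ↦ μ.rnDeriv κ x / ν.rnDeriv κ x := by
  filter_upwards [Measure.rnDeriv_mul_rnDeriv' (μ := μ) hνκ, Measure.rnDeriv_pos hνκ,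
    hνκ.ae_le (Measure.rnDeriv_lt_top ν κ)] with x hx hpos hlt
  rw [ENNReal.eq_div_iff hpos.ne' hlt.ne, mul_comm, ← hx, Pi.mul_apply]

noncomputable def bhattacharyya (μ ν : Measure α) : ℝ≥0∞ :=
  ∫⁻ x, μ.rnDeriv (μ + ν) x ^ (2⁻¹ : ℝ) * ν.rnDeriv (μ + ν) x ^ (2⁻¹ : ℝ) ∂(μ + ν)

theorem ae_rnDeriv_rpow_inv_two_mul_le_add_div_two (μ ν : Measure α) [SigmaFinite μ]
    [SigmaFinite ν] :
    ∀ᵐ x ∂(μ + ν), μ.rnDeriv (μ + ν) x ^ (2⁻¹ : ℝ) * ν.rnDeriv (μ + ν) x ^ (2⁻¹ : ℝ) ≤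
      (μ.rnDeriv (μ + ν) x + ν.rnDeriv (μ + ν) x) / 2 := by
  filter_upwards [μ.rnDeriv_ne_top (μ + ν), ν.rnDeriv_ne_top (μ + ν)] with x hμ hν
  exact ENNReal.rpow_inv_two_mul_rpow_inv_two_le hμ hν

section Probability

variable (μ ν : Measure α) [IsProbabilityMeasure μ] [IsProbabilityMeasure ν]

theorem lintegral_rnDeriv_add_div_two :
    ∫⁻ x, (μ.rnDeriv (μ + ν) x + ν.rnDeriv (μ + ν) x) / 2 ∂(μ + ν) = 1 := by
  simp_rw [ENNReal.div_eq_inv_mul]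
  rw [lintegral_const_mul _ (by fun_prop),
    lintegral_add_left (μ.measurable_rnDeriv _),
    Measure.lintegral_rnDeriv (Measure.AbsolutelyContinuous.rfl.add_right ν),
    Measure.lintegral_rnDeriv (Measure.AbsolutelyContinuous.rfl.add_right' μ), measure_univ,
    measure_univ, one_add_one_eq_two,
    ENNReal.inv_mul_cancel two_ne_zero ENNReal.ofNat_ne_top]

theorem bhattacharyya_le_one : bhattacharyya μ ν ≤ 1 :=
  (lintegral_mono_ae (ae_rnDeriv_rpow_inv_two_mul_le_add_div_two μ ν)).trans
    (lintegral_rnDeriv_add_div_two μ ν).le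

theorem eq_of_bhattacharyya_eq_one (h : bhattacharyya μ ν = 1) : μ = ν := by
  have hae := ae_eq_of_ae_le_of_lintegral_le (ae_rnDeriv_rpow_inv_two_mul_le_add_div_two μ ν)
    (by rw [← bhattacharyya, h]; exact ENNReal.one_ne_top)
    (by fun_prop) (by rw [lintegral_rnDeriv_add_div_two, ← bhattacharyya, h])
  have hpq : μ.rnDeriv (μ + ν) =ᵐ[μ + ν] ν.rnDeriv (μ + ν) := by
    filter_upwards [hae, μ.rnDeriv_ne_top (μ + ν), ν.rnDeriv_ne_top (μ + ν)] with x hx hμ hν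
    exact ENNReal.eq_of_rpow_inv_two_mul_rpow_inv_two_eq hμ hν hx
  calc μ = (μ + ν).withDensity (μ.rnDeriv (μ + ν)) :=
        (Measure.withDensity_rnDeriv_eq μ _ (Measure.AbsolutelyContinuous.rfl.add_right ν)).symm
    _ = (μ + ν).withDensity (ν.rnDeriv (μ + ν)) := withDensity_congr_ae hpq
    _ = ν := Measure.withDensity_rnDeriv_eq ν _ (Measure.AbsolutelyContinuous.rfl.add_right' μ)

end Probability

section Comparison

variable {μ ν υ : Measure α}

theorem lintegral_rnDeriv_rpow_inv_two_mul_le_bhattacharyya [SigmaFinite μ] [SigmaFinite ν]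
    [SigmaFinite υ] (h : υ ≪ μ + ν) :
    ∫⁻ x, μ.rnDeriv υ x ^ (2⁻¹ : ℝ) * ν.rnDeriv υ x ^ (2⁻¹ : ℝ) ∂υ ≤ bhattacharyya μ ν := by
  set u := υ.rnDeriv (μ + ν)
  calc ∫⁻ x, μ.rnDeriv υ x ^ (2⁻¹ : ℝ) * ν.rnDeriv υ x ^ (2⁻¹ : ℝ) ∂υ
      = ∫⁻ x, μ.rnDeriv (μ + ν) x ^ (2⁻¹ : ℝ) * ν.rnDeriv (μ + ν) x ^ (2⁻¹ : ℝ) / u x ∂υ := by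
        refine lintegral_congr_ae ?_
        filter_upwards [Measure.rnDeriv_ae_eq_div (μ := μ) h, Measure.rnDeriv_ae_eq_div (μ := ν) h,
          h.ae_le (υ.rnDeriv_ne_top (μ + ν))] with x hμ hν hu
        rw [hμ, hν, ENNReal.div_rpow_inv_two_mul_div_rpow_inv_two _ _ hu]
    _ = ∫⁻ x, u x * (μ.rnDeriv (μ + ν) x ^ (2⁻¹ : ℝ) * ν.rnDeriv (μ + ν) x ^ (2⁻¹ : ℝ) / u x)
          ∂(μ + ν) := (lintegral_rnDeriv_mul h (by fun_prop)).symm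
    _ ≤ bhattacharyya μ ν := lintegral_mono fun _ ↦ ENNReal.mul_div_le

theorem exp_neg_half_llr_add_ae_eq [SigmaFinite μ] [SigmaFinite ν] [SigmaFinite υ]
    (hμ : υ ≪ μ) (hν : υ ≪ ν) :
    (fun x ↦ Real.exp (-(llr υ μ x + llr υ ν x) / 2)) =ᵐ[υ]
      fun x ↦ (μ.rnDeriv υ x ^ (2⁻¹ : ℝ) * ν.rnDeriv υ x ^ (2⁻¹ : ℝ)).toReal := by
  filter_upwards [exp_neg_llr hμ, exp_neg_llr hν] with x hxμ hxν
  rw [ENNReal.toReal_mul, ← ENNReal.toReal_rpow, ← ENNReal.toReal_rpow, ← hxμ, ← hxν,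
    ← Real.exp_mul, ← Real.exp_mul, ← Real.exp_add]
  ring_nf

theorem exp_neg_half_integral_llr_add_le [IsProbabilityMeasure μ] [IsProbabilityMeasure ν]
    [IsProbabilityMeasure υ] (hμ : υ ≪ μ) (hν : υ ≪ ν) (hμ_int : Integrable (llr υ μ) υ)
    (hν_int : Integrable (llr υ ν) υ) :
    Real.exp (-((∫ x, llr υ μ x ∂υ) + ∫ x, llr υ ν x ∂υ) / 2) ≤ (bhattacharyya μ ν).toReal := by
  set h := fun x ↦ μ.rnDeriv υ x ^ (2⁻¹ : ℝ) * ν.rnDeriv υ x ^ (2⁻¹ : ℝ)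
  have h_le : ∫⁻ x, h x ∂υ ≤ bhattacharyya μ ν :=
    lintegral_rnDeriv_rpow_inv_two_mul_le_bhattacharyya (hμ.add_right ν)
  have h_ne_top : ∫⁻ x, h x ∂υ ≠ ∞ :=
    ne_top_of_le_ne_top ENNReal.one_ne_top (h_le.trans (bhattacharyya_le_one μ ν))
  have h_meas : Measurable h := by fun_prop
  have h_exp := exp_neg_half_llr_add_ae_eq hμ hν
  calc Real.exp (-((∫ x, llr υ μ x ∂υ) + ∫ x, llr υ ν x ∂υ) / 2)
      = Real.exp (∫ x, -(llr υ μ x + llr υ ν x) / 2 ∂υ) := by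
        rw [integral_div, integral_neg, integral_add hμ_int hν_int]
    _ ≤ ∫ x, Real.exp (-(llr υ μ x + llr υ ν x) / 2) ∂υ :=
        convexOn_exp.map_integral_le Real.continuous_exp.continuousOn isClosed_univ
          (.of_forall fun _ ↦ Set.mem_univ _) ((hμ_int.add hν_int).neg.div_const 2)
          ((integrable_toReal_of_lintegral_ne_top h_meas.aemeasurable h_ne_top).congr h_exp.symm)
    _ = (∫⁻ x, h x ∂υ).toReal := by
        rw [integral_congr_ae h_exp,
          integral_toReal h_meas.aemeasurable (ae_lt_top h_meas h_ne_top)]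
    _ ≤ (bhattacharyya μ ν).toReal :=
        ENNReal.toReal_mono (ne_top_of_le_ne_top ENNReal.one_ne_top (bhattacharyya_le_one μ ν)) h_le

end Comparison

section Divergence

variable {μ ν υ : Measure α}

theorem relEnt_ne_bot : relEnt υ μ ≠ ⊥ := by
  unfold relEnt; split_ifs <;> simp

theorem relEnt_ne_top_iff : relEnt υ μ ≠ ⊤ ↔ υ ≪ μ ∧ Integrable (llr υ μ) υ := by
  unfold relEnt; split_ifs with h <;> simp [h]

theorem relEnt_of_ne_top (h : relEnt υ μ ≠ ⊤) : relEnt υ μ = ((∫ x, llr υ μ x ∂υ : ℝ) : EReal) :=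
  if_pos (relEnt_ne_top_iff.mp h)

theorem relEnt_self [SigmaFinite μ] : relEnt μ μ = 0 := by
  have h_int : Integrable (llr μ μ) μ := (integrable_zero _ _ _).congr (llr_self μ).symm
  rw [relEnt, if_pos ⟨.rfl, h_int⟩, integral_congr_ae (llr_self μ)]
  simp

theorem exists_relEnt_add_eq_and_exp_le [IsProbabilityMeasure μ] [IsProbabilityMeasure ν]
    [IsProbabilityMeasure υ] (h : relEnt υ μ + relEnt υ ν ≠ ⊤) :
    ∃ r : ℝ, relEnt υ μ + relEnt υ ν = r ∧ Real.exp (-r / 2) ≤ (bhattacharyya μ ν).toReal := by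
  obtain ⟨hμ, hν⟩ := (EReal.add_ne_top_iff_ne_top₂ relEnt_ne_bot relEnt_ne_bot).mp h
  obtain ⟨hμ_ac, hμ_int⟩ := relEnt_ne_top_iff.mp hμ
  obtain ⟨hν_ac, hν_int⟩ := relEnt_ne_top_iff.mp hν
  exact ⟨_, by rw [relEnt_of_ne_top hμ, relEnt_of_ne_top hν, EReal.coe_add],
    exp_neg_half_integral_llr_add_le hμ_ac hν_ac hμ_int hν_int⟩

variable (μ ν)

theorem Jdiv_comm : Jdiv μ ν = Jdiv ν μ :=
  iInf_congr fun _ ↦ iInf_congr fun _ ↦ add_comm _ _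

variable [IsProbabilityMeasure μ] [IsProbabilityMeasure ν]

theorem neg_two_log_bhattacharyya_le_Jdiv :
    ((-2 * Real.log (bhattacharyya μ ν).toReal : ℝ) : EReal) ≤ Jdiv μ ν := by
  refine le_iInf₂ fun υ _ ↦ ?_
  by_cases h : relEnt υ μ + relEnt υ ν = ⊤
  · exact h ▸ le_top
  obtain ⟨r, hr, h_exp⟩ := exists_relEnt_add_eq_and_exp_le h
  rw [← Real.le_log_iff_exp_le ((Real.exp_pos _).trans_le h_exp)] at h_exp
  rw [hr, EReal.coe_le_coe_iff]
  linarith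

-- Since `Real.log 0 = 0`, the bound above yields `J(μ, ν) > 0` only once `BC(μ, ν) > 0` is known.
theorem bhattacharyya_toReal_pos_of_Jdiv_ne_top (h : Jdiv μ ν ≠ ⊤) :
    0 < (bhattacharyya μ ν).toReal := by
  obtain ⟨υ, hυ, h_lt⟩ : ∃ υ : Measure α, ∃ _ : IsProbabilityMeasure υ,
      relEnt υ μ + relEnt υ ν < ⊤ := by
    simpa only [Jdiv, iInf_lt_iff] using h.lt_top
  obtain ⟨r, -, h_exp⟩ := exists_relEnt_add_eq_and_exp_le h_lt.ne
  exact (Real.exp_pos _).trans_le h_exp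

theorem Jdiv_nonneg : 0 ≤ Jdiv μ ν := by
  refine (neg_two_log_bhattacharyya_le_Jdiv μ ν).trans' (EReal.coe_nonneg.mpr ?_)
  have h_le : (bhattacharyya μ ν).toReal ≤ 1 :=
    ENNReal.toReal_le_of_le_ofReal zero_le_one (by simpa using bhattacharyya_le_one μ ν)
  nlinarith [Real.log_nonpos ENNReal.toReal_nonneg h_le]

theorem Jdiv_self : Jdiv μ μ = 0 :=
  le_antisymm ((iInf₂_le μ ‹_›).trans_eq (by rw [relEnt_self, add_zero])) (Jdiv_nonneg μ μ)

theorem Jdiv_eq_zero_iff : Jdiv μ ν = 0 ↔ μ = ν := by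
  refine ⟨fun h ↦ ?_, fun h ↦ h ▸ Jdiv_self ν⟩
  have h_pos := bhattacharyya_toReal_pos_of_Jdiv_ne_top μ ν (h ▸ EReal.zero_ne_top)
  by_contra h_ne
  have h_lt : (bhattacharyya μ ν).toReal < 1 := ENNReal.toReal_lt_of_lt_ofReal <| by
    simpa using (bhattacharyya_le_one μ ν).lt_of_ne (mt (eq_of_bhattacharyya_eq_one μ ν) h_ne)
  have h_log := Real.log_neg h_pos h_lt
  have h_bound := neg_two_log_bhattacharyya_le_Jdiv μ ν
  rw [h, EReal.coe_nonpos] at h_bound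
  linarith

end Divergence

end

theorem stmt_7_general (S : Set ℝ) (μ ν : Measure S)
    [IsProbabilityMeasure μ] [IsProbabilityMeasure ν] :
    0 ≤ Jdiv μ ν ∧ Jdiv μ ν = Jdiv ν μ ∧ (Jdiv μ ν = 0 ↔ μ = ν) :=
  ⟨Jdiv_nonneg μ ν, Jdiv_comm μ ν, Jdiv_eq_zero_iff μ ν⟩

/-- For any two Borel probability measures μ, ν on a compact S ⊆ ℝ:
`J(μ,ν) ≥ 0`, `J(μ,ν) = J(ν,μ)`, and `J(μ,ν) = 0 ↔ μ = ν`. -/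
theorem stmt_7 (S : Set ℝ) (hS : IsCompact S) (μ ν : Measure S)
    [IsProbabilityMeasure μ] [IsProbabilityMeasure ν] :
    0 ≤ Jdiv μ ν ∧ Jdiv μ ν = Jdiv ν μ ∧ (Jdiv μ ν = 0 ↔ μ = ν) :=
  stmt_7_general S μ ν
end

section
/- Let λ be Lebesgue measure on [0,1], μ = (1/2)(λ + δ_0), and ν = (1/2)(λ + δ_1), where δ_0 and δ_1 are the Dirac measures at 0 and 1. Then H(λ|μ) = H(λ|ν) = log 2, hence J(μ,ν) ≤ 2 log 2 < ∞; on the other hand μ and ν are mutually not absolutely continuous, so H(μ|ν) = H(ν|μ) = +∞. In particular J(μ,ν) is strictly less than min{H(μ|ν), H(ν|μ)}. -/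
open MeasureTheory ProbabilityTheory Filter Topology
open scoped ENNReal NNReal Classical

/-!
Lebesgue measure on `[0,1]` has no atoms, so it is mutually singular with every Dirac measure;
hence `dλ/d(2⁻¹(λ + δₐ)) = 2` λ-a.e., the log-likelihood ratio is the constant `log 2`, and taking
`υ = λ` in the infimum bounds `J(μ,ν)` by `2 log 2`. On the other hand `{0}` is null for `ν` but
not for `μ`, and `{1}` is null for `μ` but not for `ν`.
-/

section

variable {α : Type*} [MeasurableSpace α]

lemma relEnt_eq_top_of_not_absolutelyContinuous {υ μ : Measure α} (h : ¬ υ ≪ μ) :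
    relEnt υ μ = ⊤ :=
  if_neg fun h' => h h'.1

lemma relEnt_eq_of_llr_ae_eq_const {υ μ : Measure α} [IsProbabilityMeasure υ] (h : υ ≪ μ)
    {c : ℝ} (hc : llr υ μ =ᵐ[υ] fun _ => c) :
    relEnt υ μ = (c : EReal) := by
  have hint : Integrable (llr υ μ) υ := (integrable_const c).congr hc.symm
  rw [relEnt, if_pos ⟨h, hint⟩, integral_congr_ae hc, integral_const, probReal_univ, one_smul]

lemma Jdiv_le_relEnt_add (μ ν υ : Measure α) [hυ : IsProbabilityMeasure υ] :
    Jdiv μ ν ≤ relEnt υ μ + relEnt υ ν :=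
  iInf₂_le (f := fun (υ : Measure α) (_ : IsProbabilityMeasure υ) => relEnt υ μ + relEnt υ ν)
    υ hυ

lemma llr_smul_add_ae_eq_of_mutuallySingular {lam ρ : Measure α} [IsFiniteMeasure lam]
    [SigmaFinite ρ] (h : lam ⟂ₘ ρ) {c : ℝ≥0∞} (hc : c ≠ 0) (hc_top : c ≠ ∞) :
    llr lam (c • (lam + ρ)) =ᵐ[lam] fun _ => -Real.log c.toReal := by
  have hac : lam ≪ lam + ρ := Measure.AbsolutelyContinuous.rfl.add_right ρ
  have hrn : lam.rnDeriv (lam + ρ) =ᵐ[lam] fun _ => 1 :=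
    (Measure.rnDeriv_add_right_of_mutuallySingular h).trans lam.rnDeriv_self
  filter_upwards [llr_smul_right hac c hc hc_top, hrn] with x hx hx1
  rw [hx]
  simp [llr_def, hx1]

lemma relEnt_half_add_of_mutuallySingular {lam ρ : Measure α} [IsProbabilityMeasure lam]
    [SigmaFinite ρ] (h : lam ⟂ₘ ρ) :
    relEnt lam ((2 : ℝ≥0∞)⁻¹ • (lam + ρ)) = ((Real.log 2 : ℝ) : EReal) := by
  have hc : (2 : ℝ≥0∞)⁻¹ ≠ 0 := ENNReal.inv_ne_zero.2 ENNReal.ofNat_ne_top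
  have hllr := llr_smul_add_ae_eq_of_mutuallySingular h hc (ENNReal.inv_ne_top.2 two_ne_zero)
  rw [relEnt_eq_of_llr_ae_eq_const ((Measure.AbsolutelyContinuous.rfl.add_right ρ).smul_right hc)
    hllr]
  simp [Real.log_inv]

end

lemma not_smul_add_dirac_absolutelyContinuous {α : Type*} [MeasurableSpace α]
    [MeasurableSingletonClass α] (lam : Measure α) [NullSingletonClass lam] {a b : α} (hab : a ≠ b)
    {c : ℝ≥0∞} (hc : c ≠ 0) :
    ¬ c • (lam + Measure.dirac a) ≪ c • (lam + Measure.dirac b) := by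
  intro h
  have ha : c • (lam + Measure.dirac a) {a} = 0 := h (by simp [hab])
  simp [hc] at ha

/-- With λ Lebesgue measure on [0,1], μ = (1/2)(λ + δ₀), ν = (1/2)(λ + δ₁):
`H(λ|μ) = H(λ|ν) = log 2`, hence `J(μ,ν) ≤ 2 log 2 < ∞`; on the other hand μ, ν are
mutually not absolutely continuous, so `H(μ|ν) = H(ν|μ) = +∞`; in particular
`J(μ,ν) < min(H(μ|ν), H(ν|μ))`. -/
theorem stmt_8 (lam μ ν : Measure ℝ)
    (hlam : lam = volume.restrict (Set.Icc 0 1))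
    (hμ : μ = (2 : ℝ≥0∞)⁻¹ • (lam + Measure.dirac 0))
    (hν : ν = (2 : ℝ≥0∞)⁻¹ • (lam + Measure.dirac 1)) :
    relEnt lam μ = ((Real.log 2 : ℝ) : EReal) ∧
    relEnt lam ν = ((Real.log 2 : ℝ) : EReal) ∧
    Jdiv μ ν ≤ ((2 * Real.log 2 : ℝ) : EReal) ∧ Jdiv μ ν < ⊤ ∧
    ¬ μ ≪ ν ∧ ¬ ν ≪ μ ∧ relEnt μ ν = ⊤ ∧ relEnt ν μ = ⊤ ∧
    Jdiv μ ν < min (relEnt μ ν) (relEnt ν μ) := by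
  have : IsProbabilityMeasure lam := ⟨by simp [hlam]⟩
  have : NullSingletonClass lam := by rw [hlam]; infer_instance
  have hEμ : relEnt lam μ = ((Real.log 2 : ℝ) : EReal) :=
    hμ ▸ relEnt_half_add_of_mutuallySingular (mutuallySingular_dirac 0 lam).symm
  have hEν : relEnt lam ν = ((Real.log 2 : ℝ) : EReal) :=
    hν ▸ relEnt_half_add_of_mutuallySingular (mutuallySingular_dirac 1 lam).symm
  have hJle : Jdiv μ ν ≤ ((2 * Real.log 2 : ℝ) : EReal) := by
    refine (Jdiv_le_relEnt_add μ ν lam).trans_eq ?_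
    rw [hEμ, hEν, ← EReal.coe_add, two_mul]
  have hJlt : Jdiv μ ν < ⊤ := hJle.trans_lt (EReal.coe_lt_top _)
  have hμν : ¬ μ ≪ ν := hμ ▸ hν ▸ not_smul_add_dirac_absolutelyContinuous lam zero_ne_one (by simp)
  have hνμ : ¬ ν ≪ μ := hμ ▸ hν ▸ not_smul_add_dirac_absolutelyContinuous lam one_ne_zero (by simp)
  have hRμν := relEnt_eq_top_of_not_absolutelyContinuous hμν
  have hRνμ := relEnt_eq_top_of_not_absolutelyContinuous hνμ
  exact ⟨hEμ, hEν, hJle, hJlt, hμν, hνμ, hRμν, hRνμ, by rwa [hRμν, hRνμ, min_self]⟩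
end

section
/- Let q, r ∈ (0,1) and for p ∈ [0,1] define L(p) = [p log(p/q) + (1−p) log((1−p)/(1−q))] + [p log(p/r) + (1−p) log((1−p)/(1−r))] (with the convention 0 log 0 = 0). Then L attains its minimum over [0,1] at p̂ = s/(1+s), where s = √( q r / ((1−q)(1−r)) ), and the minimum value is L(p̂) = −2 log( √((1−q)(1−r)) + √(q r) ). -/
/-!
Both relative entropies share the argument `(p, 1 - p)`, so their sum is twice the relative
entropy of `(p, 1 - p)` against the unnormalized weights `(a, b) = (√(qr), √((1-q)(1-r)))`.
By Gibbs' inequality this is at least `-log (a + b)`, with equality at the normalized weight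
`p = a / (a + b)`, which is exactly `s / (1 + s)` for `s = a / b`.
-/

open Real

/-- The weights `(a, b)` need not sum to `1`. -/
noncomputable def binaryRelEntropy (p a b : ℝ) : ℝ :=
  p * log (p / a) + (1 - p) * log ((1 - p) / b)

namespace Real

lemma mul_log_div_add_mul_log_div {q r : ℝ} (hq : 0 < q) (hr : 0 < r) (p : ℝ) :
    p * log (p / q) + p * log (p / r) = 2 * (p * log (p / √(q * r))) := by
  rcases eq_or_ne p 0 with rfl | hp
  · simp
  · have hqr : 0 < q * r := mul_pos hq hr
    rw [log_div hp hq.ne', log_div hp hr.ne', log_div hp (sqrt_pos.2 hqr).ne', log_sqrt hqr.le,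
      log_mul hq.ne' hr.ne']
    ring

/-- The tangent-line bound for the convex function `t ↦ t * log (t / u)`, at slope `log c`. -/
lemma mul_log_add_sub_le_mul_log_div {t u c : ℝ} (ht : 0 ≤ t) (hu : 0 < u) (hc : 0 < c) :
    t * log c + t - u * c ≤ t * log (t / u) := by
  rcases ht.eq_or_lt with rfl | ht
  · simp only [zero_mul, zero_div, log_zero, zero_add, zero_sub, neg_nonpos]
    positivity
  · have hx : 0 < t / (u * c) := div_pos ht (mul_pos hu hc)
    have key := mul_le_mul_of_nonneg_left (one_sub_inv_le_log_of_pos hx) ht.le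
    have hlhs : t * (1 - (t / (u * c))⁻¹) = t - u * c := by field_simp
    rw [hlhs, ← div_div, log_div (div_pos ht hu).ne' hc.ne', mul_sub] at key
    linarith

end Real

namespace binaryRelEntropy

lemma add_eq_two_mul_sqrt {q r q' r' : ℝ} (hq : 0 < q) (hr : 0 < r) (hq' : 0 < q')
    (hr' : 0 < r') (p : ℝ) :
    binaryRelEntropy p q q' + binaryRelEntropy p r r' =
      2 * binaryRelEntropy p √(q * r) √(q' * r') := by
  have h := mul_log_div_add_mul_log_div hq hr p
  have h' := mul_log_div_add_mul_log_div hq' hr' (1 - p)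
  simp only [binaryRelEntropy]
  linarith

lemma neg_log_add_le {p a b : ℝ} (hp : p ∈ Set.Icc (0 : ℝ) 1) (ha : 0 < a) (hb : 0 < b) :
    -log (a + b) ≤ binaryRelEntropy p a b := by
  have hc : 0 < (a + b)⁻¹ := by positivity
  have h₁ := mul_log_add_sub_le_mul_log_div hp.1 ha hc
  have h₂ := mul_log_add_sub_le_mul_log_div (sub_nonneg.2 hp.2) hb hc
  have hsum : a * (a + b)⁻¹ + b * (a + b)⁻¹ = 1 := by
    rw [← add_mul, mul_inv_cancel₀ (by positivity)]
  rw [binaryRelEntropy, ← log_inv]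
  linarith

lemma eq_neg_log_add {a b : ℝ} (ha : a ≠ 0) (hb : b ≠ 0) (hab : a + b ≠ 0) :
    binaryRelEntropy (a / (a + b)) a b = -log (a + b) := by
  have h₁ : 1 - a / (a + b) = b / (a + b) := by field_simp; ring
  have hdiv₁ : a / (a + b) / a = (a + b)⁻¹ := by field_simp
  have hdiv₂ : b / (a + b) / b = (a + b)⁻¹ := by field_simp
  rw [binaryRelEntropy, h₁, hdiv₁, hdiv₂, ← add_mul, ← add_div, div_self hab, one_mul, log_inv]

end binaryRelEntropy

/-- Let q, r ∈ (0,1) and for p ∈ [0,1] define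
`L(p) = [p log(p/q) + (1−p) log((1−p)/(1−q))] + [p log(p/r) + (1−p) log((1−p)/(1−r))]`
(with the convention 0 log 0 = 0, which is automatic for `Real.log`).
Then L attains its minimum over [0,1] at `p̂ = s/(1+s)` where
`s = √(qr/((1−q)(1−r)))`, and `L(p̂) = −2 log(√((1−q)(1−r)) + √(qr))`. -/
theorem stmt_9 (q r : ℝ) (hq : q ∈ Set.Ioo (0 : ℝ) 1) (hr : r ∈ Set.Ioo (0 : ℝ) 1)
    (L : ℝ → ℝ)
    (hL : ∀ p, L p = (p * Real.log (p / q) + (1 - p) * Real.log ((1 - p) / (1 - q)))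
      + (p * Real.log (p / r) + (1 - p) * Real.log ((1 - p) / (1 - r))))
    (s : ℝ) (hs : s = Real.sqrt (q * r / ((1 - q) * (1 - r))))
    (phat : ℝ) (hphat : phat = s / (1 + s)) :
    phat ∈ Set.Icc (0 : ℝ) 1 ∧ (∀ p ∈ Set.Icc (0 : ℝ) 1, L phat ≤ L p) ∧
      L phat = -2 * Real.log (Real.sqrt ((1 - q) * (1 - r)) + Real.sqrt (q * r)) := by
  obtain ⟨hq₀, hq₁⟩ := hq
  obtain ⟨hr₀, hr₁⟩ := hr
  set a := √(q * r)
  set b := √((1 - q) * (1 - r))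
  have ha : 0 < a := sqrt_pos.2 (mul_pos hq₀ hr₀)
  have hb : 0 < b := sqrt_pos.2 (mul_pos (sub_pos.2 hq₁) (sub_pos.2 hr₁))
  have hphat' : phat = a / (a + b) := by
    rw [hphat, hs, sqrt_div (mul_pos hq₀ hr₀).le]
    change a / b / (1 + a / b) = a / (a + b)
    field_simp
    ring
  have hL' : ∀ p, L p = 2 * binaryRelEntropy p a b := fun p => by
    rw [hL, ← binaryRelEntropy.add_eq_two_mul_sqrt hq₀ hr₀ (sub_pos.2 hq₁) (sub_pos.2 hr₁)]
    rfl
  have hmin : L phat = -2 * log (a + b) := by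
    rw [hL', hphat', binaryRelEntropy.eq_neg_log_add ha.ne' hb.ne' (by positivity)]
    ring
  refine ⟨?_, fun p hp => ?_, by rw [hmin, add_comm a b]⟩
  · rw [hphat']
    exact ⟨by positivity, (div_le_one (by positivity)).2 (by linarith)⟩
  · rw [hmin, hL']
    linarith [binaryRelEntropy.neg_log_add_le hp ha hb]
end

section
/- Let 0 < r < q < 1 and δ = q − r. Then √((1−q)(1−r)) + √(q r) ≤ √(1 − δ²); consequently −2 log( √((1−q)(1−r)) + √(q r) ) ≥ −log(1 − δ²) ≥ δ² = (q − r)². -/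
/-!
Squaring, `(√((1-a)(1-b)) + √(ab))² = (1-a)(1-b) + ab + 2√(a(1-a))·√(b(1-b))`, and AM–GM bounds
the cross term by `a(1-a) + b(1-b)`; the sum of these is exactly `1 - (a-b)²`. The logarithmic
bounds then follow from monotonicity of `log` and from `log (1 - t) ≤ -t`.
-/

open Real

theorem sqrt_mul_one_sub_add_sqrt_mul_le {a b : ℝ} (ha₀ : 0 ≤ a) (ha₁ : a ≤ 1) (hb₀ : 0 ≤ b)
    (hb₁ : b ≤ 1) : √((1 - a) * (1 - b)) + √(a * b) ≤ √(1 - (a - b) ^ 2) := by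
  apply le_sqrt_of_sq_le
  have hx : √(a * (1 - a)) ^ 2 = a * (1 - a) := sq_sqrt (by nlinarith)
  have hy : √(b * (1 - b)) ^ 2 = b * (1 - b) := sq_sqrt (by nlinarith)
  have hcross : √((1 - a) * (1 - b)) * √(a * b) = √(a * (1 - a)) * √(b * (1 - b)) := by
    rw [← sqrt_mul (by nlinarith), ← sqrt_mul (by nlinarith)]
    ring_nf
  calc (√((1 - a) * (1 - b)) + √(a * b)) ^ 2
      = (1 - a) * (1 - b) + a * b + 2 * (√(a * (1 - a)) * √(b * (1 - b))) := by
        rw [add_sq, sq_sqrt (by nlinarith), sq_sqrt (by nlinarith), mul_assoc, hcross]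
        ring
    _ ≤ (1 - a) * (1 - b) + a * b + (√(a * (1 - a)) ^ 2 + √(b * (1 - b)) ^ 2) := by
        gcongr
        rw [← mul_assoc]
        exact two_mul_le_add_sq _ _
    _ = 1 - (a - b) ^ 2 := by
        rw [hx, hy]
        ring

theorem neg_log_le_neg_two_mul_log_of_le_sqrt {s t : ℝ} (hs : 0 < s) (ht : 0 ≤ t)
    (hst : s ≤ √t) : -log t ≤ -2 * log s := by
  have : log s ≤ log t / 2 := log_sqrt ht ▸ log_le_log hs hst
  linarith

theorem le_neg_log_one_sub {t : ℝ} (ht : t < 1) : t ≤ -log (1 - t) := by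
  linarith [log_le_sub_one_of_pos (sub_pos.mpr ht)]

/-- Let 0 < r < q < 1 and δ = q − r. Then
`√((1−q)(1−r)) + √(qr) ≤ √(1 − δ²)`; consequently
`−2 log(√((1−q)(1−r)) + √(qr)) ≥ −log(1 − δ²) ≥ δ² = (q−r)²`. -/
theorem stmt_10 (q r δ : ℝ) (hr0 : 0 < r) (hrq : r < q) (hq1 : q < 1) (hδ : δ = q - r) :
    Real.sqrt ((1 - q) * (1 - r)) + Real.sqrt (q * r) ≤ Real.sqrt (1 - δ ^ 2) ∧
    -Real.log (1 - δ ^ 2) ≤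
      -2 * Real.log (Real.sqrt ((1 - q) * (1 - r)) + Real.sqrt (q * r)) ∧
    δ ^ 2 ≤ -Real.log (1 - δ ^ 2) ∧ δ ^ 2 = (q - r) ^ 2 := by
  subst hδ
  have hq0 : 0 < q := hr0.trans hrq
  have hbound := sqrt_mul_one_sub_add_sqrt_mul_le hq0.le hq1.le hr0.le (hrq.trans hq1).le
  have hpos : 0 < √((1 - q) * (1 - r)) + √(q * r) :=
    add_pos_of_nonneg_of_pos (sqrt_nonneg _) (sqrt_pos.mpr (mul_pos hq0 hr0))
  have hδ_lt_one : (q - r) ^ 2 < 1 := by nlinarith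
  exact ⟨hbound, neg_log_le_neg_two_mul_log_of_le_sqrt hpos (by linarith) hbound,
    le_neg_log_one_sub hδ_lt_one, rfl⟩
end

section
/- For every integer m ≥ 1 there exist constants 0 < c_5 < c_6 (depending only on m) such that for all integers n ≥ m and all positive integers n_1, …, n_m with n_1 + ⋯ + n_m = n: c_5 · Π_{i=1}^m (n_i/n)^{−2 n_i} ≤ ( n! / (n_1! ⋯ n_m!) ) · ( Γ(n) / (Γ(n_1) ⋯ Γ(n_m)) ) ≤ c_6 · Π_{i=1}^m (n_i/n)^{−2 n_i}. -/
/-!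
Write `k! = s_k · √(2k) · (k/e)^k`, where `s_k` is `Stirling.stirlingSeq`, and use `Γ(k) = k!/k`.
Then `(n! / ∏ n_i!) · (Γ(n) / ∏ Γ(n_i))` equals exactly
`2^(1-m) · (s_n / ∏ s_{n_i})² · ∏ (n_i/n)^(-2 n_i)`,
since `(n/e)^n = ∏ (n/n_i)^{n_i} · ∏ (n_i/e)^{n_i}` when `∑ n_i = n`. The Stirling sequence
decreases from `s_1 = e/√2` to its limit `√π`, which pins the prefactor between `2π/e^(2m)` and
`e²/(2π)^m`.
-/

open Real Finset Stirling
open scoped Nat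

namespace Stirling

lemma stirlingSeq_le_exp_one_div_sqrt_two {k : ℕ} (hk : k ≠ 0) : stirlingSeq k ≤ exp 1 / √2 := by
  obtain ⟨j, rfl⟩ := Nat.exists_eq_succ_of_ne_zero hk
  simpa using stirlingSeq'_antitone (Nat.zero_le j)

lemma stirlingSeq_mem_Icc {k : ℕ} (hk : k ≠ 0) : stirlingSeq k ∈ Set.Icc (√π) (exp 1 / √2) :=
  ⟨sqrt_pi_le_stirlingSeq hk, stirlingSeq_le_exp_one_div_sqrt_two hk⟩

lemma factorial_sq_eq {k : ℕ} (hk : k ≠ 0) :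
    (k ! : ℝ) ^ 2 = stirlingSeq k ^ 2 * (2 * k) * ((k / exp 1) ^ k) ^ 2 := by
  have : (0 : ℝ) < k := by positivity
  rw [stirlingSeq, div_pow, mul_pow, sq_sqrt (by positivity)]
  field_simp

lemma prod_factorial_sq_eq {ι : Type*} [Fintype ι] (k : ι → ℕ) (hk : ∀ i, k i ≠ 0) :
    (∏ i, ((k i)! : ℝ)) ^ 2 = (∏ i, stirlingSeq (k i)) ^ 2 * 2 ^ Fintype.card ι *
      (∏ i, (k i : ℝ)) * (∏ i, ((k i : ℝ) / exp 1) ^ k i) ^ 2 := by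
  simp only [← prod_pow, prod_congr rfl fun i _ => factorial_sq_eq (hk i), prod_mul_distrib,
    prod_const, card_univ]
  ring

end Stirling

lemma Real.Gamma_natCast_eq_factorial_div {k : ℕ} (hk : k ≠ 0) : Gamma k = k ! / k := by
  rw [eq_div_iff (by positivity), mul_comm, ← Gamma_add_one (by positivity),
    Gamma_nat_eq_factorial]

lemma prod_div_pow_mul_prod_pow_div {ι : Type*} (s : Finset ι) (k : ι → ℕ) (x y : ℝ) :
    (∏ i ∈ s, (x / k i) ^ k i) * ∏ i ∈ s, ((k i : ℝ) / y) ^ k i = (x / y) ^ ∑ i ∈ s, k i := by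
  rw [← prod_mul_distrib, ← prod_pow_eq_pow_sum]
  refine prod_congr rfl fun i _ => ?_
  rw [← mul_pow]
  rcases eq_or_ne (k i) 0 with h | h
  · simp [h]
  · rw [div_mul_div_cancel₀ (Nat.cast_ne_zero.2 h)]

lemma div_prod_mem_Icc {ι : Type*} (s : Finset ι) {a b x : ℝ} {y : ι → ℝ} (ha : 0 < a)
    (hx : x ∈ Set.Icc a b) (hy : ∀ i ∈ s, y i ∈ Set.Icc a b) :
    x / ∏ i ∈ s, y i ∈ Set.Icc (a / b ^ #s) (b / a ^ #s) := by
  have hlo : a ^ #s ≤ ∏ i ∈ s, y i := by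
    simpa using prod_le_prod (fun _ _ => ha.le) fun i hi => (hy i hi).1
  have hhi : ∏ i ∈ s, y i ≤ b ^ #s := by
    simpa using prod_le_prod (fun i hi => ha.le.trans (hy i hi).1) fun i hi => (hy i hi).2
  have hb : 0 < b := ha.trans_le (hx.1.trans hx.2)
  exact ⟨div_le_div₀ (ha.le.trans hx.1) hx.1 (prod_pos fun i hi => ha.trans_le (hy i hi).1) hhi,
    div_le_div₀ hb.le hx.2 (by positivity) hlo⟩

theorem multinomial_mul_gamma_ratio_eq {ι : Type*} [Fintype ι] [Nonempty ι] (k : ι → ℕ)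
    (hk : ∀ i, k i ≠ 0) {n : ℕ} (hn : ∑ i, k i = n) :
    ((n ! : ℝ) / ∏ i, ((k i)! : ℝ)) * (Gamma n / ∏ i, Gamma (k i)) =
      2 / 2 ^ Fintype.card ι * (stirlingSeq n / ∏ i, stirlingSeq (k i)) ^ 2 *
        ∏ i, ((k i : ℝ) / n) ^ (-(2 * (k i : ℤ))) := by
  have hn0 : n ≠ 0 := (hn ▸ sum_pos (fun i _ => Nat.pos_of_ne_zero (hk i)) univ_nonempty).ne'
  have hkR : ∀ i, (0 : ℝ) < k i := fun i => by have := hk i; positivity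
  have hgamma : Gamma n / ∏ i, Gamma (k i) = n ! / n / ((∏ i, ((k i)! : ℝ)) / ∏ i, (k i : ℝ)) := by
    rw [Gamma_natCast_eq_factorial_div hn0,
      prod_congr rfl fun i _ => Gamma_natCast_eq_factorial_div (hk i), prod_div_distrib]
  have hpow : ∏ i, ((k i : ℝ) / n) ^ (-(2 * (k i : ℤ))) = (∏ i, ((n : ℝ) / k i) ^ k i) ^ 2 := by
    rw [← prod_pow]
    refine prod_congr rfl fun i _ => ?_
    rw [zpow_neg, ← inv_zpow, inv_div, mul_comm, zpow_mul, zpow_natCast, zpow_two, sq]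
  have hsplit := prod_div_pow_mul_prod_pow_div univ k n (exp 1)
  rw [hn] at hsplit
  have hS : 0 < ∏ i, stirlingSeq (k i) :=
    prod_pos fun i _ => (sqrt_pos.2 pi_pos).trans_le (sqrt_pi_le_stirlingSeq (hk i))
  have hR : 0 < ∏ i, ((k i : ℝ) / exp 1) ^ k i := prod_pos fun i _ => by have := hkR i; positivity
  have hK : 0 < ∏ i, (k i : ℝ) := prod_pos fun i _ => hkR i
  calc ((n ! : ℝ) / ∏ i, ((k i)! : ℝ)) * (Gamma n / ∏ i, Gamma (k i))
      = ((n ! : ℝ) / ∏ i, ((k i)! : ℝ)) ^ 2 * (∏ i, (k i : ℝ)) / n := by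
        rw [hgamma]
        field_simp
    _ = _ := by
        rw [div_pow, factorial_sq_eq hn0, prod_factorial_sq_eq k hk, ← hsplit, hpow]
        field_simp

lemma stirling_prefactor_mem_Icc {ι : Type*} [Fintype ι] (k : ι → ℕ) (hk : ∀ i, k i ≠ 0)
    {n : ℕ} (hn : n ≠ 0) :
    2 / 2 ^ Fintype.card ι * (stirlingSeq n / ∏ i, stirlingSeq (k i)) ^ 2 ∈
      Set.Icc (2 * π / exp 1 ^ (2 * Fintype.card ι)) (exp 1 ^ 2 / (2 * π) ^ Fintype.card ι) := by
  obtain ⟨hlo, hhi⟩ := div_prod_mem_Icc univ (sqrt_pos.2 pi_pos) (stirlingSeq_mem_Icc hn)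
    fun i _ => stirlingSeq_mem_Icc (hk i)
  rw [card_univ] at hlo hhi
  have hpi : √π ^ 2 = π := sq_sqrt pi_pos.le
  have h2 : √2 ^ 2 = 2 := sq_sqrt zero_le_two
  have hlo_sq :
      (√π / (exp 1 / √2) ^ Fintype.card ι) ^ 2 = π / (exp 1 ^ 2 / 2) ^ Fintype.card ι := by
    rw [div_pow, pow_right_comm, div_pow, hpi, h2]
  have hhi_sq : (exp 1 / √2 / √π ^ Fintype.card ι) ^ 2 = exp 1 ^ 2 / 2 / π ^ Fintype.card ι := by
    rw [div_pow, div_pow, pow_right_comm, h2, hpi]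
  constructor
  · calc 2 * π / exp 1 ^ (2 * Fintype.card ι)
        = 2 / 2 ^ Fintype.card ι * (√π / (exp 1 / √2) ^ Fintype.card ι) ^ 2 := by
          rw [hlo_sq, pow_mul, div_pow]
          field_simp
      _ ≤ _ := by gcongr
  · calc _ ≤ 2 / 2 ^ Fintype.card ι * (exp 1 / √2 / √π ^ Fintype.card ι) ^ 2 := by
          gcongr
          exact le_trans (by positivity) hlo
      _ = exp 1 ^ 2 / (2 * π) ^ Fintype.card ι := by
          rw [hhi_sq, mul_pow]
          field_simp

lemma two_mul_pi_div_exp_pow_lt (m : ℕ) : 2 * π / exp 1 ^ (2 * m) < exp 1 ^ 2 / (2 * π) ^ m := by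
  rw [div_lt_div_iff₀ (by positivity) (by positivity)]
  have h : 2 * π < exp 1 ^ 2 := by nlinarith [pi_lt_d2, exp_one_gt_d9]
  calc 2 * π * (2 * π) ^ m = (2 * π) ^ (m + 1) := by ring
    _ < (exp 1 ^ 2) ^ (m + 1) := pow_lt_pow_left₀ h (by positivity) (by omega)
    _ = exp 1 ^ 2 * exp 1 ^ (2 * m) := by rw [← pow_mul]; ring

/-- For every m ≥ 1 there are constants 0 < c₅ < c₆ (depending only on m)
such that for all n ≥ m and all positive integers n₁,…,n_m summing to n,
`c₅ · Π (nᵢ/n)^(−2nᵢ) ≤ (n!/(n₁!⋯n_m!)) · (Γ(n)/(Γ(n₁)⋯Γ(n_m))) ≤ c₆ · Π (nᵢ/n)^(−2nᵢ)`. -/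
theorem stmt_11 (m : ℕ) (hm : 1 ≤ m) :
    ∃ c₅ c₆ : ℝ, 0 < c₅ ∧ c₅ < c₆ ∧
      ∀ n : ℕ, m ≤ n → ∀ nv : Fin m → ℕ, (∀ i, 0 < nv i) → (∑ i, nv i) = n →
        c₅ * ∏ i, ((nv i : ℝ) / (n : ℝ)) ^ (-(2 * (nv i : ℤ))) ≤
            ((n.factorial : ℝ) / ∏ i, ((nv i).factorial : ℝ)) *
              (Real.Gamma (n : ℝ) / ∏ i, Real.Gamma ((nv i : ℝ))) ∧
          ((n.factorial : ℝ) / ∏ i, ((nv i).factorial : ℝ)) *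
              (Real.Gamma (n : ℝ) / ∏ i, Real.Gamma ((nv i : ℝ))) ≤
            c₆ * ∏ i, ((nv i : ℝ) / (n : ℝ)) ^ (-(2 * (nv i : ℤ))) := by
  have : Nonempty (Fin m) := ⟨⟨0, hm⟩⟩
  refine ⟨2 * π / exp 1 ^ (2 * m), exp 1 ^ 2 / (2 * π) ^ m, by positivity,
    two_mul_pi_div_exp_pow_lt m, fun n hn nv hpos hsum => ?_⟩
  have hnv : ∀ i, nv i ≠ 0 := fun i => (hpos i).ne'
  have hprod : 0 ≤ ∏ i, ((nv i : ℝ) / n) ^ (-(2 * (nv i : ℤ))) := by positivity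
  obtain ⟨hlo, hhi⟩ := stirling_prefactor_mem_Icc nv hnv (n := n) (by omega)
  rw [multinomial_mul_gamma_ratio_eq nv hnv hsum, Fintype.card_fin]
  rw [Fintype.card_fin] at hlo hhi
  exact ⟨mul_le_mul_of_nonneg_right hlo hprod, mul_le_mul_of_nonneg_right hhi hprod⟩
end

section
/- Let r ∈ ℝ, r ≠ 0, set u = e^r/(e^r − 1) − 1/r and c = r/(e^r − 1), and let μ_0 be the Borel measure on [0,1] with density c e^{r x} with respect to Lebesgue measure λ on [0,1]. Then μ_0 is a probability measure with mean ∫_0^1 x μ_0(dx) = u, and inf{ H(μ | λ) : μ a Borel probability measure on [0,1] with ∫_0^1 x μ(dx) = u } = H(μ_0 | λ) = r(u − 1) + log(1 + r u). -/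
open MeasureTheory ProbabilityTheory Filter Topology
open scoped ENNReal NNReal Classical

/-!
Gibbs' variational principle. For `μ ≪ λ` and the tilted measure `λ_f = e^f λ / ∫ e^f dλ`,
`H(μ|λ) = H(μ|λ_f) + ∫ f dμ - log ∫ e^f dλ ≥ ∫ f dμ - log ∫ e^f dλ`, with equality for `μ = λ_f`.
Taking `f x = r x`, the bound is the constant `r u - log ((e^r - 1)/r)` on all measures on `[0,1]`
with mean `u`, and it is attained by `μ₀ = λ_f`, whose mean is `u`.
-/

open Real Set

section Gibbs

variable {α : Type*} [MeasurableSpace α] {μ ν : Measure α} {f : α → ℝ}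

lemma relEnt_of_ac_of_integrable (hμν : μ ≪ ν) (h_int : Integrable (llr μ ν) μ) :
    relEnt μ ν = ((∫ x, llr μ ν x ∂μ : ℝ) : EReal) :=
  if_pos ⟨hμν, h_int⟩

lemma integral_sub_log_integral_exp_le_relEnt [IsProbabilityMeasure μ] [IsProbabilityMeasure ν]
    (hfμ : Integrable f μ) (hfν : Integrable (fun x ↦ exp (f x)) ν) :
    ((∫ x, f x ∂μ - log (∫ x, exp (f x) ∂ν) : ℝ) : EReal) ≤ relEnt μ ν := by
  by_cases h : μ ≪ ν ∧ Integrable (llr μ ν) μ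
  · obtain ⟨hμν, h_int⟩ := h
    rw [relEnt_of_ac_of_integrable hμν h_int, EReal.coe_le_coe_iff]
    have := isProbabilityMeasure_tilted hfν
    have gibbs := InformationTheory.integral_llr_add_sub_measure_univ_nonneg
      (hμν.trans (absolutelyContinuous_tilted hfν))
      (integrable_llr_tilted_right hμν hfμ h_int hfν)
    rw [integral_llr_tilted_right hμν hfμ hfν h_int] at gibbs
    simp only [probReal_univ] at gibbs
    linarith
  · rw [relEnt, if_neg h]
    exact le_top

lemma relEnt_tilted_left [IsProbabilityMeasure ν] (hfν : Integrable (fun x ↦ exp (f x)) ν)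
    (hf : Integrable f (ν.tilted f)) :
    relEnt (ν.tilted f) ν
      = ((∫ x, f x ∂(ν.tilted f) - log (∫ x, exp (f x) ∂ν) : ℝ) : EReal) := by
  have := isProbabilityMeasure_tilted hfν
  have hac := tilted_absolutelyContinuous ν f
  have hllr : llr (ν.tilted f) ν =ᵐ[ν.tilted f] fun x ↦ f x - log (∫ x, exp (f x) ∂ν) := by
    refine hac.ae_le ?_
    have hfm : AEMeasurable f ν := by simpa using hfν.1.aemeasurable.log
    filter_upwards [llr_tilted_left .rfl hfν hfm, llr_self ν] with x hx hself
    simp [hx, hself]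
  have h_int : Integrable (llr (ν.tilted f) ν) (ν.tilted f) :=
    (hf.sub (integrable_const _)).congr hllr.symm
  rw [relEnt_of_ac_of_integrable hac h_int, integral_congr_ae hllr,
    integral_sub hf (integrable_const _), integral_const, probReal_univ, one_smul]

end Gibbs

section ExponentialIntegrals

variable {r : ℝ}

lemma exp_sub_one_ne_zero (hr : r ≠ 0) : exp r - 1 ≠ 0 :=
  sub_ne_zero.mpr (exp_eq_one_iff r |>.not.mpr hr)

lemma integral_exp_const_mul (hr : r ≠ 0) (a b : ℝ) :
    ∫ x in a..b, exp (r * x) = (exp (r * b) - exp (r * a)) / r := by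
  rw [intervalIntegral.integral_comp_mul_left (fun x ↦ exp x) hr, integral_exp, smul_eq_mul,
    inv_mul_eq_div]

lemma integral_id_mul_exp_const_mul (hr : r ≠ 0) (a b : ℝ) :
    ∫ x in a..b, x * exp (r * x)
      = (b / r - 1 / r ^ 2) * exp (r * b) - (a / r - 1 / r ^ 2) * exp (r * a) := by
  have hderiv (x : ℝ) :
      HasDerivAt (fun y ↦ (y / r - 1 / r ^ 2) * exp (r * y)) (x * exp (r * x)) x := by
    have hpoly : HasDerivAt (fun y ↦ y / r - 1 / r ^ 2) (1 / r) x :=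
      ((hasDerivAt_id' x).div_const r).sub_const _
    have hexp : HasDerivAt (fun y ↦ exp (r * y)) (exp (r * x) * r) x := by
      simpa using ((hasDerivAt_id' x).const_mul r).exp
    refine (hpoly.mul hexp).congr_deriv ?_
    field_simp
    ring
  exact intervalIntegral.integral_eq_sub_of_hasDerivAt (fun x _ ↦ hderiv x)
    ((by fun_prop : Continuous fun x ↦ x * exp (r * x)).intervalIntegrable _ _)

end ExponentialIntegrals

section UnitInterval

instance : IsProbabilityMeasure (volume.restrict (Icc (0 : ℝ) 1)) :=
  ⟨by simp [Real.volume_Icc]⟩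

lemma Continuous.integrable_of_ae_mem_Icc {μ : Measure ℝ} [IsFiniteMeasure μ] {g : ℝ → ℝ}
    (hg : Continuous g) {a b : ℝ} (h : ∀ᵐ x ∂μ, x ∈ Icc a b) : Integrable g μ := by
  rw [← Measure.restrict_eq_self_of_ae_mem h]
  exact hg.integrableOn_Icc

lemma integral_Icc_zero_one_eq_intervalIntegral (g : ℝ → ℝ) :
    ∫ x in Icc (0 : ℝ) 1, g x = ∫ x in (0 : ℝ)..1, g x := by
  rw [integral_Icc_eq_integral_Ioc, intervalIntegral.integral_of_le zero_le_one]

variable {r : ℝ}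

lemma integrable_exp_const_mul_Icc (r : ℝ) :
    Integrable (fun x ↦ exp (r * x)) (volume.restrict (Icc (0 : ℝ) 1)) :=
  (by fun_prop : Continuous fun x ↦ exp (r * x)).integrableOn_Icc

lemma integral_exp_const_mul_Icc (hr : r ≠ 0) :
    ∫ x in Icc (0 : ℝ) 1, exp (r * x) = (exp r - 1) / r := by
  simp [integral_Icc_zero_one_eq_intervalIntegral, integral_exp_const_mul hr]

lemma withDensity_Icc_eq_tilted (hr : r ≠ 0) :
    (volume.restrict (Icc (0 : ℝ) 1)).withDensity
        (fun x ↦ ENNReal.ofReal (r / (exp r - 1) * exp (r * x)))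
      = (volume.restrict (Icc (0 : ℝ) 1)).tilted (r * ·) := by
  rw [Measure.tilted, integral_exp_const_mul_Icc hr]
  congr with x
  rw [div_div_eq_mul_div, div_mul_eq_mul_div, mul_comm]

lemma integral_id_tilted_Icc (hr : r ≠ 0) :
    ∫ x, x ∂(volume.restrict (Icc (0 : ℝ) 1)).tilted (r * ·) = exp r / (exp r - 1) - 1 / r := by
  have hden := exp_sub_one_ne_zero hr
  simp_rw [integral_tilted, integral_exp_const_mul_Icc hr, smul_eq_mul, div_mul_eq_mul_div,
    integral_div, integral_Icc_zero_one_eq_intervalIntegral, mul_comm (exp _),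
    integral_id_mul_exp_const_mul hr]
  simp only [mul_one, mul_zero, exp_zero, zero_div]
  field_simp
  ring

end UnitInterval

/-- Let r ≠ 0, u = e^r/(e^r−1) − 1/r, c = r/(e^r−1), and let μ₀ have
density c e^{rx} with respect to Lebesgue measure λ on [0,1]. Then μ₀ is a probability
measure with mean u, and the infimum of H(μ|λ) over Borel probability measures μ on [0,1]
with mean u equals `H(μ₀|λ) = r(u−1) + log(1 + ru)`. -/
theorem stmt_15 (r : ℝ) (hr : r ≠ 0) (u c : ℝ)
    (hu : u = Real.exp r / (Real.exp r - 1) - 1 / r) (hc : c = r / (Real.exp r - 1))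
    (μ₀ : Measure ℝ)
    (hμ₀ : μ₀ = (volume.restrict (Set.Icc 0 1)).withDensity
      (fun x => ENNReal.ofReal (c * Real.exp (r * x)))) :
    IsProbabilityMeasure μ₀ ∧ (∫ x, x ∂μ₀) = u ∧
    (⨅ (μ : Measure ℝ) (_ : IsProbabilityMeasure μ) (_ : μ (Set.Icc 0 1) = 1)
        (_ : ∫ x, x ∂μ = u), relEnt μ (volume.restrict (Set.Icc 0 1)))
      = relEnt μ₀ (volume.restrict (Set.Icc 0 1)) ∧
    relEnt μ₀ (volume.restrict (Set.Icc 0 1))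
      = ((r * (u - 1) + Real.log (1 + r * u) : ℝ) : EReal) := by
  set ν := volume.restrict (Icc (0 : ℝ) 1)
  have hexp := integrable_exp_const_mul_Icc r
  rw [hc, withDensity_Icc_eq_tilted hr] at hμ₀
  subst hμ₀
  have hmean : ∫ x, x ∂ν.tilted (r * ·) = u := hu ▸ integral_id_tilted_Icc hr
  have hprob := isProbabilityMeasure_tilted hexp
  have hsupp : ∀ᵐ x ∂ν.tilted (r * ·), x ∈ Icc 0 1 :=
    (tilted_absolutelyContinuous ν _).ae_le (ae_restrict_mem measurableSet_Icc)
  have hrelEnt : relEnt (ν.tilted (r * ·)) ν = ((r * u - log ((exp r - 1) / r) : ℝ) : EReal) := by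
    rw [relEnt_tilted_left hexp ((continuous_const_mul r).integrable_of_ae_mem_Icc hsupp),
      integral_const_mul, hmean, integral_exp_const_mul_Icc hr]
  have hvalue : r * (u - 1) + log (1 + r * u) = r * u - log ((exp r - 1) / r) := by
    have hden := exp_sub_one_ne_zero hr
    have : 1 + r * u = exp r / ((exp r - 1) / r) := by rw [hu]; field_simp; ring
    rw [this, log_div (exp_ne_zero r) (div_ne_zero hden hr), log_exp]
    ring
  refine ⟨hprob, hmean, le_antisymm ?_ ?_, by rw [hrelEnt, hvalue]⟩
  · exact iInf₂_le_of_le _ hprob <| iInf₂_le_of_le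
      ((mem_ae_iff_prob_eq_one measurableSet_Icc).1 hsupp) hmean le_rfl
  · refine le_iInf₂ fun μ _ => le_iInf₂ fun hIcc hm => ?_
    have hsuppμ : ∀ᵐ x ∂μ, x ∈ Icc 0 1 := (mem_ae_iff_prob_eq_one measurableSet_Icc).2 hIcc
    have := integral_sub_log_integral_exp_le_relEnt
      ((continuous_const_mul r).integrable_of_ae_mem_Icc hsuppμ) hexp
    rwa [integral_const_mul, hm, integral_exp_const_mul_Icc hr, ← hrelEnt] at this
end

section
/- Let S be a compact subset of ℝ, M_1(S) the space of Borel probability measures on S with the weak topology, and let Z_1, Z_2, … be i.i.d. random Borel probability measures on S with mean measure ν_0 (E[Z_1(B)] = ν_0(B) for Borel B). For each n, let (X_{n1}, …, X_{nn}) be a random vector with X_{ni} ≥ 0 and Σ_{i=1}^n X_{ni} = 1, independent of (Z_1, Z_2, …), and set 𝒲_n = Σ_{i=1}^n X_{ni} Z_i. If lim_{n→∞} E[ Σ_{i=1}^n X_{ni}² ] = 0, then 𝒲_n converges to ν_0 in probability in M_1(S); in particular, for every continuous f : S → ℝ and every ε > 0, P( |Σ_{i=1}^n X_{ni} ⟨Z_i,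 f⟩ − ⟨ν_0, f⟩| ≥ ε ) → 0 as n → ∞. -/
open MeasureTheory ProbabilityTheory Filter Topology

/-!
Put `Y i = ⟨Z i, f⟩ - ⟨ν₀, f⟩`. These are bounded by `2 ‖f‖∞`, centred because `ν₀` is the mean
measure, and pairwise uncorrelated. As `∑ i, X n i = 1`, the error is `∑ i, X n i * Y i`, and since
the weights are independent of the `Z i` the cross terms of its second moment vanish:
`E[(∑ i, X n i * Y i)²] = ∑ i, E[X n i²] E[Y i²] ≤ 4 ‖f‖∞² E[∑ i, X n i²] → 0`.
Chebyshev's inequality concludes.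
-/

namespace MeasureTheory.Measure

variable {Ω α E : Type*} [MeasurableSpace Ω] [MeasurableSpace α] [NormedAddCommGroup E]
  [NormedSpace ℝ E] {P : Measure Ω}

theorem stronglyMeasurable_integral {f : α → E} (hf : StronglyMeasurable f) :
    StronglyMeasurable fun μ : Measure α ↦ ∫ x, f x ∂μ :=
  hf.integral_kernel (κ := ⟨id, measurable_id⟩)

theorem integrable_integral_bind {Z : Ω → Measure α} (hZ : Measurable Z)
    {f : α → E} (hf : Integrable f (P.bind Z)) : Integrable (fun ω ↦ ∫ x, f x ∂(Z ω)) P :=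
  hf.integral_comp (η := ⟨Z, hZ⟩) (κ := Kernel.const Unit P) (a := ())

theorem integral_bind {Z : Ω → Measure α} (hZ : Measurable Z) {f : α → E}
    (hf : Integrable f (P.bind Z)) : ∫ x, f x ∂(P.bind Z) = ∫ ω, ∫ x, f x ∂(Z ω) ∂P :=
  Kernel.integral_comp (η := ⟨Z, hZ⟩) (κ := Kernel.const Unit P) (a := ()) hf

theorem integral_integral_sub_integral_eq_zero [IsProbabilityMeasure P] {Z : Ω → Measure α}
    (hZ : Measurable Z) {ν : Measure α} (hν : ∀ B, MeasurableSet B → ∫⁻ ω, Z ω B ∂P = ν B)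
    {f : α → ℝ} (hf : Integrable f ν) : ∫ ω, (∫ x, f x ∂(Z ω) - ∫ x, f x ∂ν) ∂P = 0 := by
  obtain rfl : P.bind Z = ν := ext fun B hB ↦ by rw [bind_apply hB hZ.aemeasurable, hν B hB]
  simp [integral_sub (integrable_integral_bind hZ hf) (integrable_const _), integral_bind hZ hf]

end MeasureTheory.Measure

theorem abs_sum_mul_le_of_sum_eq_one {ι : Type*} {s : Finset ι} {w y : ι → ℝ} {c : ℝ}
    (hw0 : ∀ i ∈ s, 0 ≤ w i) (hw1 : ∑ i ∈ s, w i = 1) (hy : ∀ i ∈ s, |y i| ≤ c) :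
    |∑ i ∈ s, w i * y i| ≤ c := calc
  _ ≤ ∑ i ∈ s, w i * c := by
    refine (Finset.abs_sum_le_sum_abs _ _).trans (Finset.sum_le_sum fun i hi ↦ ?_)
    rw [abs_mul, abs_of_nonneg (hw0 i hi)]
    exact mul_le_mul_of_nonneg_left (hy i hi) (hw0 i hi)
  _ = c := by rw [← Finset.sum_mul, hw1, one_mul]

theorem tendstoInMeasure_of_tendsto_integral_sq_sub {Ω ι : Type*} [MeasurableSpace Ω]
    {P : Measure Ω} [IsFiniteMeasure P] {l : Filter ι} {f : ι → Ω → ℝ} {g : Ω → ℝ}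
    (hint : ∀ᶠ i in l, Integrable (fun ω ↦ (f i ω - g ω) ^ 2) P)
    (hlim : Tendsto (fun i ↦ ∫ ω, (f i ω - g ω) ^ 2 ∂P) l (𝓝 0)) :
    TendstoInMeasure P f l g := by
  rw [tendstoInMeasure_iff_measureReal_dist]
  intro ε hε
  have hchebyshev : ∀ᶠ i in l, P.real {ω | ε ≤ dist (f i ω) (g ω)}
      ≤ (∫ ω, (f i ω - g ω) ^ 2 ∂P) / ε ^ 2 := by
    filter_upwards [hint] with i hi
    have hset : {ω | ε ≤ dist (f i ω) (g ω)} = {ω | ε ^ 2 ≤ (f i ω - g ω) ^ 2} := by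
      ext ω
      rw [Set.mem_ofPred_eq, Set.mem_ofPred_eq, Real.dist_eq, ← sq_abs (f i ω - g ω),
        pow_le_pow_iff_left₀ hε.le (abs_nonneg _) two_ne_zero]
    rw [le_div_iff₀' (by positivity), hset]
    exact mul_meas_ge_le_integral_of_nonneg (ae_of_all _ fun ω ↦ sq_nonneg _) hi (ε ^ 2)
  refine tendsto_of_tendsto_of_tendsto_of_le_of_le' tendsto_const_nhds ?_
    (Eventually.of_forall fun _ ↦ measureReal_nonneg) hchebyshev
  simpa using hlim.div_const (ε ^ 2)

section WeightedSum

variable {Ω ι : Type*} [MeasurableSpace Ω] {P : Measure Ω} [IsProbabilityMeasure P]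

theorem integral_sq_sum_mul_le {s : Finset ι} {X Y : ι → Ω → ℝ} {c : ℝ}
    (hX : ∀ i ∈ s, MemLp (X i) 2 P) (hY : ∀ i, Measurable (Y i)) (hYc : ∀ i ω, |Y i ω| ≤ c)
    (hXY : IndepFun (fun ω i ↦ X i ω) (fun ω i ↦ Y i ω) P)
    (hYY : ∀ i j, i ≠ j → ∫ ω, Y i ω * Y j ω ∂P = 0) :
    ∫ ω, (∑ i ∈ s, X i ω * Y i ω) ^ 2 ∂P ≤ c ^ 2 * ∫ ω, ∑ i ∈ s, X i ω ^ 2 ∂P := by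
  have hYYc : ∀ i j ω, ‖Y i ω * Y j ω‖ ≤ c * c := fun i j ω ↦ by
    rw [norm_mul]
    exact mul_le_mul (hYc i ω) (hYc j ω) (abs_nonneg _) ((abs_nonneg _).trans (hYc i ω))
  have hXX : ∀ i ∈ s, ∀ j ∈ s, Integrable (fun ω ↦ X i ω * X j ω) P :=
    fun i hi j hj ↦ (hX i hi).integrable_mul (hX j hj)
  have hterm : ∀ i ∈ s, ∀ j ∈ s, Integrable (fun ω ↦ (Y i ω * Y j ω) * (X i ω * X j ω)) P :=
    fun i hi j hj ↦ (hXX i hi j hj).bdd_mul ((hY i).mul (hY j)).aestronglyMeasurable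
      (ae_of_all _ (hYYc i j))
  have hsplit : ∀ i ∈ s, ∀ j ∈ s, ∫ ω, (Y i ω * Y j ω) * (X i ω * X j ω) ∂P
      = (∫ ω, Y i ω * Y j ω ∂P) * ∫ ω, X i ω * X j ω ∂P := by
    intro i hi j hj
    have hprod : Measurable fun v : ι → ℝ ↦ v i * v j := by fun_prop
    exact (hXY.comp hprod hprod).symm.integral_fun_mul_eq_mul_integral
      ((hY i).mul (hY j)).aestronglyMeasurable (hXX i hi j hj).aestronglyMeasurable
  have hYsq : ∀ i, ∫ ω, Y i ω * Y i ω ∂P ≤ c ^ 2 := fun i ↦ by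
    simpa [sq] using (le_abs_self _).trans
      (norm_integral_le_of_norm_le_const (μ := P) (ae_of_all _ (hYYc i i)))
  calc ∫ ω, (∑ i ∈ s, X i ω * Y i ω) ^ 2 ∂P
      = ∫ ω, ∑ i ∈ s, ∑ j ∈ s, (Y i ω * Y j ω) * (X i ω * X j ω) ∂P := by
        congr with ω
        rw [sq, Finset.sum_mul_sum]
        exact Finset.sum_congr rfl fun i _ ↦ Finset.sum_congr rfl fun j _ ↦ by ring
    _ = ∑ i ∈ s, ∑ j ∈ s, ∫ ω, (Y i ω * Y j ω) * (X i ω * X j ω) ∂P := by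
        rw [integral_finsetSum _ fun i hi ↦ integrable_finsetSum _ fun j hj ↦ hterm i hi j hj]
        exact Finset.sum_congr rfl fun i hi ↦ integral_finsetSum _ fun j hj ↦ hterm i hi j hj
    _ = ∑ i ∈ s, (∫ ω, Y i ω * Y i ω ∂P) * ∫ ω, X i ω ^ 2 ∂P := by
        refine Finset.sum_congr rfl fun i hi ↦ ?_
        rw [Finset.sum_eq_single_of_mem i hi fun j hj hji ↦ by
          rw [hsplit i hi j hj, hYY i j hji.symm, zero_mul], hsplit i hi i hi]
        simp_rw [sq]
    _ ≤ ∑ i ∈ s, c ^ 2 * ∫ ω, X i ω ^ 2 ∂P :=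
        Finset.sum_le_sum fun i _ ↦ mul_le_mul_of_nonneg_right (hYsq i)
          (integral_nonneg fun ω ↦ sq_nonneg _)
    _ = c ^ 2 * ∫ ω, ∑ i ∈ s, X i ω ^ 2 ∂P := by
        rw [← Finset.mul_sum, integral_finsetSum _ fun i hi ↦ (hX i hi).integrable_sq]

theorem tendstoInMeasure_sum_mul_zero {X : ℕ → ℕ → Ω → ℝ} {Y : ℕ → Ω → ℝ} {c : ℝ}
    (hX : ∀ n i, Measurable (X n i)) (hX0 : ∀ n i ω, 0 ≤ X n i ω)
    (hX1 : ∀ n, 0 < n → ∀ ω, ∑ i ∈ Finset.range n, X n i ω = 1)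
    (hY : ∀ i, Measurable (Y i)) (hYc : ∀ i ω, |Y i ω| ≤ c)
    (hXY : ∀ n, IndepFun (fun ω i ↦ X n i ω) (fun ω i ↦ Y i ω) P)
    (hYY : ∀ i j, i ≠ j → ∫ ω, Y i ω * Y j ω ∂P = 0)
    (hX2 : Tendsto (fun n ↦ ∫ ω, ∑ i ∈ Finset.range n, X n i ω ^ 2 ∂P) atTop (𝓝 0)) :
    TendstoInMeasure P (fun n ω ↦ ∑ i ∈ Finset.range n, X n i ω * Y i ω) atTop 0 := by
  have hXle : ∀ n, 0 < n → ∀ i ∈ Finset.range n, ∀ ω, ‖X n i ω‖ ≤ 1 := fun n hn i hi ω ↦ by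
    rw [Real.norm_of_nonneg (hX0 n i ω), ← hX1 n hn ω]
    exact Finset.single_le_sum (fun j _ ↦ hX0 n j ω) hi
  refine tendstoInMeasure_of_tendsto_integral_sq_sub ?_ ?_
  · filter_upwards [eventually_gt_atTop 0] with n hn
    simp only [Pi.zero_apply, sub_zero]
    exact (MemLp.of_bound (p := 2) (Finset.measurable_sum _ fun i _ ↦
      (hX n i).mul (hY i)).aestronglyMeasurable c (ae_of_all _ fun ω ↦
        abs_sum_mul_le_of_sum_eq_one (fun i _ ↦ hX0 n i ω) (hX1 n hn ω)
          fun i _ ↦ hYc i ω)).integrable_sq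
  · refine tendsto_of_tendsto_of_tendsto_of_le_of_le' tendsto_const_nhds
      (by simpa using hX2.const_mul (c ^ 2))
      (Eventually.of_forall fun n ↦ integral_nonneg fun ω ↦ sq_nonneg _) ?_
    filter_upwards [eventually_gt_atTop 0] with n hn
    simpa using integral_sq_sum_mul_le (fun i hi ↦ .of_bound (hX n i).aestronglyMeasurable 1
      (ae_of_all _ (hXle n hn i hi))) hY hYc (hXY n) hYY

end WeightedSum

theorem stmt_19_general {Ω : Type*} [MeasurableSpace Ω] (P : Measure Ω) [IsProbabilityMeasure P]
    (S : Set ℝ) (hS : IsCompact S)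
    (Z : ℕ → Ω → Measure S)
    (hZmeas : ∀ i, Measurable (Z i))
    (hZprob : ∀ i ω, IsProbabilityMeasure (Z i ω))
    (hZindep : iIndepFun Z P)
    (ν₀ : Measure S) [IsProbabilityMeasure ν₀]
    (hmean : ∀ i, ∀ B : Set S, MeasurableSet B → ∫⁻ ω, Z i ω B ∂P = ν₀ B)
    (X : ℕ → ℕ → Ω → ℝ)
    (hXmeas : ∀ n i, Measurable (X n i))
    (hX0 : ∀ n i ω, 0 ≤ X n i ω)
    (hXsum : ∀ n, 0 < n → ∀ ω, ∑ i ∈ Finset.range n, X n i ω = 1)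
    (hindep : ∀ n, IndepFun (fun ω => fun i => X n i ω) (fun ω => fun i => Z i ω) P)
    (hvar : Tendsto (fun n => ∫ ω, (∑ i ∈ Finset.range n, (X n i ω) ^ 2) ∂P)
      atTop (𝓝 0)) :
    ∀ f : S → ℝ, Continuous f → ∀ ε : ℝ, 0 < ε →
      Tendsto (fun n => P {ω |
          ε ≤ |(∑ i ∈ Finset.range n, X n i ω * ∫ x, f x ∂(Z i ω)) - ∫ x, f x ∂ν₀|})
        atTop (𝓝 0) := by
  intro f hf ε hε
  have : CompactSpace S := isCompact_iff_compactSpace.mp hS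
  set F := BoundedContinuousFunction.mkOfCompact ⟨f, hf⟩
  have hfF : ∀ (μ : Measure S) [IsProbabilityMeasure μ], |∫ x, f x ∂μ| ≤ ‖F‖ :=
    fun μ _ ↦ F.norm_integral_le_norm μ
  set φ : Measure S → ℝ := fun μ ↦ ∫ x, f x ∂μ - ∫ x, f x ∂ν₀
  have hφ : Measurable φ :=
    (Measure.stronglyMeasurable_integral hf.stronglyMeasurable).measurable.sub_const _
  have hφZ : ∀ i ω, |φ (Z i ω)| ≤ 2 * ‖F‖ := fun i ω ↦ by
    have := hZprob i ω
    exact (abs_sub _ _).trans (by linarith [hfF (Z i ω), hfF ν₀])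
  have hφZ_mean : ∀ i, ∫ ω, φ (Z i ω) ∂P = 0 := fun i ↦
    Measure.integral_integral_sub_integral_eq_zero (hZmeas i) (hmean i) (F.integrable ν₀)
  have hφZ_uncorr : ∀ i j, i ≠ j → ∫ ω, φ (Z i ω) * φ (Z j ω) ∂P = 0 := fun i j hij ↦ by
    have hind : IndepFun (fun ω ↦ φ (Z i ω)) (fun ω ↦ φ (Z j ω)) P :=
      (hZindep.indepFun hij).comp hφ hφ
    rw [hind.integral_fun_mul_eq_mul_integral (hφ.comp (hZmeas i)).aestronglyMeasurable
      (hφ.comp (hZmeas j)).aestronglyMeasurable, hφZ_mean, zero_mul]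
  have hconv := tendstoInMeasure_iff_dist.mp
    (tendstoInMeasure_sum_mul_zero (Y := fun i ω ↦ φ (Z i ω)) hXmeas hX0 hXsum
      (fun i ↦ hφ.comp (hZmeas i)) hφZ (fun n ↦ (hindep n).comp measurable_id
        (measurable_pi_lambda _ fun i ↦ hφ.comp (measurable_pi_apply i))) hφZ_uncorr hvar) ε hε
  refine hconv.congr' ?_
  filter_upwards [eventually_gt_atTop 0] with n hn
  congr 1
  ext ω
  simp only [φ, Set.mem_ofPred_eq, Pi.zero_apply, Real.dist_eq, sub_zero, mul_sub,
    Finset.sum_sub_distrib, ← Finset.sum_mul, hXsum n hn ω, one_mul]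

/-- Let S ⊆ ℝ be compact, Z₁, Z₂, … i.i.d. random Borel probability
measures on S with mean measure ν₀, and for each n let (X_{n1},…,X_{nn}) be a nonnegative
random vector summing to 1, independent of the Z's; set 𝒲_n = Σ_{i<n} X_{ni} Z_i. If
`E[Σ_{i<n} X_{ni}²] → 0`, then 𝒲_n → ν₀ in probability in M₁(S); in particular, for every
continuous f : S → ℝ and ε > 0, `P(|Σ_{i<n} X_{ni}⟨Z_i,f⟩ − ⟨ν₀,f⟩| ≥ ε) → 0`. -/
theorem stmt_19 {Ω : Type*} [MeasurableSpace Ω] (P : Measure Ω) [IsProbabilityMeasure P]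
    (S : Set ℝ) (hS : IsCompact S)
    (Z : ℕ → Ω → Measure S)
    (hZmeas : ∀ i, Measurable (Z i))
    (hZprob : ∀ i ω, IsProbabilityMeasure (Z i ω))
    (hZindep : iIndepFun Z P)
    (hZident : ∀ i j, Measure.map (Z i) P = Measure.map (Z j) P)
    (ν₀ : Measure S) [IsProbabilityMeasure ν₀]
    (hmean : ∀ i, ∀ B : Set S, MeasurableSet B → ∫⁻ ω, Z i ω B ∂P = ν₀ B)
    (X : ℕ → ℕ → Ω → ℝ)
    (hXmeas : ∀ n i, Measurable (X n i))
    (hX0 : ∀ n i ω, 0 ≤ X n i ω)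
    (hXsum : ∀ n, 0 < n → ∀ ω, ∑ i ∈ Finset.range n, X n i ω = 1)
    (hindep : ∀ n, IndepFun (fun ω => fun i => X n i ω) (fun ω => fun i => Z i ω) P)
    (hvar : Tendsto (fun n => ∫ ω, (∑ i ∈ Finset.range n, (X n i ω) ^ 2) ∂P)
      atTop (𝓝 0)) :
    ∀ f : S → ℝ, Continuous f → ∀ ε : ℝ, 0 < ε →
      Tendsto (fun n => P {ω |
          ε ≤ |(∑ i ∈ Finset.range n, X n i ω * ∫ x, f x ∂(Z i ω)) - ∫ x, f x ∂ν₀|})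
        atTop (𝓝 0) :=
  stmt_19_general P S hS Z hZmeas hZprob hZindep ν₀ hmean X hXmeas hX0 hXsum hindep hvar
end
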